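/- arXiv:2203.04536 — 3 statements merged into one kernel-verified Lean document; each statement's English description precedes it below -/
import Mathlib

section
/- For every distinguisher class D ⊆ [−1,1]^X, every advantage bound ε > 0, and every failure probability bound δ ∈ (0,1), SAMP-DF-R([0,1]^X, D, ε, δ) = SAMP-DF-A([0,1]^X, D, ε, δ) ≥ fat_D(12ε)/8 + log(1−δ). -/
open scoped ENNReal Pointwise

noncomputable section

namespace OI

/-- Expectation of a real-valued function under a probability mass function. -/
def pexp {α : Type*} (q : PMF α) (f : α → ℝ) : ℝ := ∑' a, (q a).toReal * f a

/-- Inner product of two functions w.r.t. the distribution `μ`. -/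
def inn {X : Type*} (μ : PMF X) (f g : X → ℝ) : ℝ := pexp μ fun x => f x * g x

/-- Dual Minkowski (semi)norm of `f` w.r.t. the class `F`. -/
def dnorm {X : Type*} (μ : PMF X) (F : Set (X → ℝ)) (f : X → ℝ) : ℝ :=
  sSup ((fun g => |inn μ f g|) '' F)

/-- `C` is an ε-covering of `G` w.r.t. the seminorm defined by `F`. -/
def IsCover {X : Type*} (μ : PMF X) (F G : Set (X → ℝ)) (ε : ℝ) (C : Set (X → ℝ)) : Prop :=
  C ⊆ G ∧ ∀ g ∈ G, ∃ c ∈ C, dnorm μ F (g - c) ≤ ε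

/-- Covering number `N_{μ,F}(G, ε)` (`⊤` if no finite covering exists). -/
def covN {X : Type*} (μ : PMF X) (F G : Set (X → ℝ)) (ε : ℝ) : ℕ∞ :=
  ⨅ (C : Set (X → ℝ)) (_ : IsCover μ F G ε C), C.encard

/-- Base-2 logarithm of an extended natural number (junk value on `⊤`). -/
def elog2 (N : ℕ∞) : ℝ := Real.logb 2 (N.toNat : ℝ)

/-- Bernoulli distribution on `Bool` with mean (the truncation to `[0,1]` of) `r`. -/
def bern (r : ℝ) : PMF Bool := PMF.bernoulli (min (Real.toNNReal r) 1) (min_le_right _ _)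

/-- The distribution `μ_p` of individual-outcome pairs. -/
def exDist {X : Type*} (μ : PMF X) (p : X → ℝ) : PMF (X × Bool) :=
  μ.bind fun x => (bern (p x)).map fun o => (x, o)

/-- `n` i.i.d. samples from `q`. -/
def iid {α : Type*} (q : PMF α) : (n : ℕ) → PMF (Fin n → α)
  | 0 => PMF.pure Fin.elim0
  | n + 1 => (iid q n).bind fun v => q.map fun a => Fin.cons a v

/-- Probability of an event under a PMF. -/
def prob {α : Type*} (q : PMF α) (E : Set α) : ℝ≥0∞ := q.toOuterMeasure E

/-- A (possibly randomized) `n`-sample learner. -/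
abbrev Learner (X : Type*) (n : ℕ) := (Fin n → X × Bool) → PMF (X → ℝ)

/-- Distribution of the learner output on `n` i.i.d. samples from `μ_{p*}`. -/
def outDist {X : Type*} (μ : PMF X) (pstar : X → ℝ) {n : ℕ} (A : Learner X n) :
    PMF (X → ℝ) :=
  (iid (exDist μ pstar) n).bind A

/-- `p` is a predictor, i.e. takes values in `[0,1]`. -/
def Predictor {X : Type*} (p : X → ℝ) : Prop := ∀ x, p x ∈ Set.Icc (0 : ℝ) 1

/-- `d` takes values in `[-1,1]`. -/
def Dist1 {X : Type*} (d : X → ℝ) : Prop := ∀ x, d x ∈ Set.Icc (-1 : ℝ) 1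

/-- The class `[0,1]^X` of all predictors. -/
def allPred (X : Type*) : Set (X → ℝ) := {p | Predictor p}

/-- The learner `A` succeeds for target `pstar`: with probability at least `1 - δ` it outputs
a predictor whose maximum distinguishing advantage w.r.t. `pstar` over `D` is at most `ε`. -/
def Achieves {X : Type*} (μ : PMF X) (D : Set (X → ℝ)) (ε δ : ℝ) (pstar : X → ℝ) {n : ℕ}
    (A : Learner X n) : Prop :=
  ENNReal.ofReal (1 - δ) ≤
    prob (outDist μ pstar A) {p | Predictor p ∧ dnorm μ D (p - pstar) ≤ ε}

/-- The agnostic benchmark `inf_{p' ∈ P} ‖p' - pstar‖_{μ,D}`. -/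
def agTarget {X : Type*} (μ : PMF X) (P D : Set (X → ℝ)) (pstar : X → ℝ) : ℝ :=
  sInf ((fun p' => dnorm μ D (p' - pstar)) '' P)

/-- The learner `A` succeeds agnostically for target `pstar`. -/
def AchievesAg {X : Type*} (μ : PMF X) (P D : Set (X → ℝ)) (ε δ : ℝ) (pstar : X → ℝ) {n : ℕ}
    (A : Learner X n) : Prop :=
  ENNReal.ofReal (1 - δ) ≤
    prob (outDist μ pstar A)
      {p | Predictor p ∧ dnorm μ D (p - pstar) ≤ agTarget μ P D pstar + ε}

/-- Distribution-specific realizable OI learner. -/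
def DSRL {X : Type*} (μ : PMF X) (P D : Set (X → ℝ)) (ε δ : ℝ) (n : ℕ)
    (A : Learner X n) : Prop :=
  ∀ pstar ∈ P, Achieves μ D ε δ pstar A

/-- Distribution-specific agnostic OI learner. -/
def DSAL {X : Type*} (μ : PMF X) (P D : Set (X → ℝ)) (ε δ : ℝ) (n : ℕ)
    (A : Learner X n) : Prop :=
  ∀ pstar : X → ℝ, Predictor pstar → AchievesAg μ P D ε δ pstar A

/-- Distribution-free realizable OI learner. -/
def DFRL {X : Type*} (P D : Set (X → ℝ)) (ε δ : ℝ) (n : ℕ) (A : Learner X n) : Prop :=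
  ∀ μ : PMF X, DSRL μ P D ε δ n A

/-- Distribution-free agnostic OI learner. -/
def DFAL {X : Type*} (P D : Set (X → ℝ)) (ε δ : ℝ) (n : ℕ) (A : Learner X n) : Prop :=
  ∀ μ : PMF X, DSAL μ P D ε δ n A

/-- Sample complexity of distribution-specific realizable OI. -/
def SAMPDSR {X : Type*} (μ : PMF X) (P D : Set (X → ℝ)) (ε δ : ℝ) : ℕ∞ :=
  ⨅ (n : ℕ) (_ : ∃ A : Learner X n, DSRL μ P D ε δ n A), (n : ℕ∞)

/-- Sample complexity of distribution-specific agnostic OI. -/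
def SAMPDSA {X : Type*} (μ : PMF X) (P D : Set (X → ℝ)) (ε δ : ℝ) : ℕ∞ :=
  ⨅ (n : ℕ) (_ : ∃ A : Learner X n, DSAL μ P D ε δ n A), (n : ℕ∞)

/-- Sample complexity of distribution-free realizable OI. -/
def SAMPDFR {X : Type*} (P D : Set (X → ℝ)) (ε δ : ℝ) : ℕ∞ :=
  ⨅ (n : ℕ) (_ : ∃ A : Learner X n, DFRL P D ε δ n A), (n : ℕ∞)

/-- Sample complexity of distribution-free agnostic OI. -/
def SAMPDFA {X : Type*} (P D : Set (X → ℝ)) (ε δ : ℝ) : ℕ∞ :=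
  ⨅ (n : ℕ) (_ : ∃ A : Learner X n, DFAL P D ε δ n A), (n : ℕ∞)

/-- The points `x 0, …, x (n-1)` are `γ`-fat shattered by `F`. -/
def Shatters {X : Type*} (F : Set (X → ℝ)) (γ : ℝ) {n : ℕ} (x : Fin n → X) : Prop :=
  ∃ r : Fin n → ℝ, ∀ b : Fin n → Bool, ∃ f ∈ F,
    ∀ i, γ ≤ (if b i then (1 : ℝ) else -1) * (f (x i) - r i)

/-- The `γ`-fat-shattering dimension of `F`. -/
def fatDim {X : Type*} (F : Set (X → ℝ)) (γ : ℝ) : ℕ∞ :=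
  ⨆ (n : ℕ) (_ : ∃ x : Fin n → X, Shatters F γ x), (n : ℕ∞)

end OI

/-!
For `P = [0,1]^X` the target `p*` lies in `P`, so the agnostic benchmark vanishes and the two
sample complexities coincide.

For the lower bound, put the uniform distribution on `k` points that `D` shatters at margin `12ε`,
and for `t ∈ {0,1}^k` let the target be `4/5` or `1/5` on these points according to `t`. Targets at
Hamming distance `h` are `(36/5)εh/k` apart in `‖·‖_{μ,D}`, so by Gilbert–Varshamov, as a Hamming
ball of radius `5k/18` has at most `2^{7k/8}` points, there are `2^{k/8}` targets whose
`ε`-neighbourhoods are pairwise disjoint. A sample is at most `8/5 < 2` times likelier under any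
target than under the constant `1/2`, so `n` samples change the probability of any event by a factor
at most `2^n`. Since the learner succeeds with probability `1 - δ` on every target and the success
events are disjoint, `2^{k/8} (1 - δ) ≤ 2^n`.
-/

namespace OI

section Probability

variable {α β : Type*}

lemma prob_bind_le_mul {m m' : PMF α} {c : ℝ≥0∞} (h : ∀ s, m s ≤ c * m' s)
    (A : α → PMF β) (E : Set β) : prob (m.bind A) E ≤ c * prob (m'.bind A) E := by
  simp only [prob, PMF.toOuterMeasure_bind_apply, ← ENNReal.tsum_mul_left]
  exact ENNReal.tsum_le_tsum fun s => by
    rw [← mul_assoc]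
    exact mul_le_mul_left (h s) _

lemma iid_apply_le_pow_mul {q q' : PMF α} {c : ℝ≥0∞} (h : ∀ a, q a ≤ c * q' a) :
    ∀ n s, iid q n s ≤ c ^ n * iid q' n s
  | 0, s => by simp only [iid, pow_zero, one_mul]; exact le_rfl
  | n + 1, s => by
    have hmap : ∀ v, (q.map fun a => Fin.cons a v) s ≤ c * (q'.map fun a => Fin.cons a v) s := by
      intro v
      simp only [PMF.map_apply, ← ENNReal.tsum_mul_left]
      exact ENNReal.tsum_le_tsum fun a => by split_ifs <;> simp [h a]
    simp only [iid, PMF.bind_apply, ← ENNReal.tsum_mul_left]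
    refine ENNReal.tsum_le_tsum fun v => ?_
    calc iid q n v * (q.map fun a => Fin.cons a v) s
        ≤ (c ^ n * iid q' n v) * (c * (q'.map fun a => Fin.cons a v) s) :=
          mul_le_mul' (iid_apply_le_pow_mul h n v) (hmap v)
      _ = c ^ (n + 1) * (iid q' n v * (q'.map fun a => Fin.cons a v) s) := by ring

lemma sum_prob_le_one (q : PMF α) {T : Finset β} {E : β → Set α}
    (hE : (T : Set β).PairwiseDisjoint E) : ∑ t ∈ T, prob q (E t) ≤ 1 := by
  let _ : MeasurableSpace α := ⊤
  have hmeas : ∀ s : Set α, MeasurableSet s := fun _ => MeasurableSpace.measurableSet_top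
  simp only [prob, ← q.toMeasure_apply_eq_toOuterMeasure_apply (hmeas _)]
  rw [← MeasureTheory.measure_biUnion_finset hE fun _ _ => hmeas _]
  exact MeasureTheory.prob_le_one

end Probability

section Expectation

variable {α : Type*} (q : PMF α) {h h' : α → ℝ} {c : ℝ}

lemma summable_pexp (hc : ∀ a, |h a| ≤ c) : Summable fun a => (q a).toReal * h a :=
  ((ENNReal.summable_toReal q.tsum_coe_ne_top).mul_right c).of_norm_bounded fun a => by
    rw [norm_mul, Real.norm_eq_abs, abs_of_nonneg ENNReal.toReal_nonneg]
    exact mul_le_mul_of_nonneg_left (hc a) ENNReal.toReal_nonneg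

lemma tsum_toReal_eq_one : ∑' a, (q a).toReal = 1 := by
  rw [← ENNReal.tsum_toReal_eq q.apply_ne_top, q.tsum_coe, ENNReal.toReal_one]

lemma abs_pexp_le (hc : ∀ a, |h a| ≤ c) : |pexp q h| ≤ c := by
  have hsum := (ENNReal.summable_toReal q.tsum_coe_ne_top).mul_right c
  have htot : ∑' a, (q a).toReal * c = c := by rw [tsum_mul_right, tsum_toReal_eq_one, one_mul]
  rw [abs_le, pexp]
  constructor
  · calc -c = ∑' a, (q a).toReal * -c := by rw [tsum_mul_right, tsum_toReal_eq_one, one_mul]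
      _ ≤ _ := (hsum.neg.congr fun a => by ring).tsum_le_tsum (fun a =>
          mul_le_mul_of_nonneg_left (neg_le_of_abs_le (hc a)) ENNReal.toReal_nonneg)
          (summable_pexp q hc)
  · exact htot ▸ (summable_pexp q hc).tsum_le_tsum (fun a =>
      mul_le_mul_of_nonneg_left (le_of_abs_le (hc a)) ENNReal.toReal_nonneg) hsum

lemma pexp_sub {c' : ℝ} (hc : ∀ a, |h a| ≤ c) (hc' : ∀ a, |h' a| ≤ c') :
    pexp q (fun a => h a - h' a) = pexp q h - pexp q h' := by
  simp only [pexp, mul_sub]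
  exact (summable_pexp q hc).tsum_sub (summable_pexp q hc')

end Expectation

lemma Dist1.abs_le_one {X : Type*} {d : X → ℝ} (hd : Dist1 d) (y : X) : |d y| ≤ 1 :=
  abs_le.mpr (hd y)

lemma Predictor.abs_sub_le_one {X : Type*} {p q : X → ℝ} (hp : Predictor p) (hq : Predictor q)
    (y : X) : |(p - q) y| ≤ 1 := by
  rw [Pi.sub_apply, abs_le]
  constructor <;> linarith [(hp y).1, (hp y).2, (hq y).1, (hq y).2]

section DualNorm

variable {X : Type*} (μ : PMF X) {D : Set (X → ℝ)}

lemma abs_mul_le_one {f g : X → ℝ} (hf : ∀ y, |f y| ≤ 1) (hg : Dist1 g) (y : X) :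
    |f y * g y| ≤ 1 := by
  rw [abs_mul]
  exact mul_le_one₀ (hf y) (abs_nonneg _) (hg.abs_le_one y)

lemma dnorm_nonneg (f : X → ℝ) : 0 ≤ dnorm μ D f :=
  Real.sSup_nonneg <| by rintro _ ⟨g, _, rfl⟩; exact abs_nonneg _

lemma dnorm_zero : dnorm μ D 0 = 0 :=
  le_antisymm (Real.sSup_le (by rintro _ ⟨g, _, rfl⟩; simp [inn, pexp]) le_rfl)
    (dnorm_nonneg μ 0)

lemma abs_inn_le_dnorm (hD : ∀ d ∈ D, Dist1 d) {f g : X → ℝ} (hf : ∀ y, |f y| ≤ 1)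
    (hg : g ∈ D) : |inn μ f g| ≤ dnorm μ D f :=
  le_csSup ⟨1, by rintro _ ⟨g', hg', rfl⟩; exact abs_pexp_le μ (abs_mul_le_one hf (hD g' hg'))⟩
    ⟨g, hg, rfl⟩

lemma dnorm_sub_le (hD : ∀ d ∈ D, Dist1 d) {p q r : X → ℝ} (hp : Predictor p)
    (hq : Predictor q) (hr : Predictor r) :
    dnorm μ D (q - r) ≤ dnorm μ D (p - q) + dnorm μ D (p - r) := by
  refine Real.sSup_le ?_ (add_nonneg (dnorm_nonneg μ _) (dnorm_nonneg μ _))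
  rintro _ ⟨g, hg, rfl⟩
  have hsplit : inn μ (q - r) g = inn μ (p - r) g - inn μ (p - q) g := by
    rw [inn, inn, inn, ← pexp_sub μ (abs_mul_le_one (hp.abs_sub_le_one hr) (hD g hg))
      (abs_mul_le_one (hp.abs_sub_le_one hq) (hD g hg))]
    congr 1
    funext y
    simp only [Pi.sub_apply]
    ring
  show |inn μ (q - r) g| ≤ _
  rw [hsplit, add_comm]
  exact (abs_sub _ _).trans (add_le_add
    (abs_inn_le_dnorm μ hD (hp.abs_sub_le_one hr) hg)
    (abs_inn_le_dnorm μ hD (hp.abs_sub_le_one hq) hg))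

end DualNorm

section RealizableAgnostic

variable {X : Type*} {P D : Set (X → ℝ)} {ε δ : ℝ} {pstar : X → ℝ}

lemma agTarget_eq_zero (μ : PMF X) (hp : pstar ∈ P) : agTarget μ P D pstar = 0 := by
  have hlb : ∀ v ∈ (fun p' => dnorm μ D (p' - pstar)) '' P, 0 ≤ v := by
    rintro _ ⟨p', _, rfl⟩
    exact dnorm_nonneg μ _
  refine le_antisymm (csInf_le ⟨0, hlb⟩ ⟨pstar, hp, ?_⟩) (Real.sInf_nonneg hlb)
  simp only [sub_self, dnorm_zero]

lemma achievesAg_iff (μ : PMF X) (hp : pstar ∈ P) {n : ℕ} (A : Learner X n) :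
    AchievesAg μ P D ε δ pstar A ↔ Achieves μ D ε δ pstar A := by
  rw [AchievesAg, agTarget_eq_zero μ hp, zero_add]
  rfl

lemma dfrl_allPred_iff_dfal {n : ℕ} (A : Learner X n) :
    DFRL (allPred X) D ε δ n A ↔ DFAL (allPred X) D ε δ n A :=
  forall_congr' fun μ => forall₂_congr fun _ hp => (achievesAg_iff μ hp A).symm

lemma sampDFR_allPred_eq_sampDFA : SAMPDFR (allPred X) D ε δ = SAMPDFA (allPred X) D ε δ := by
  simp only [SAMPDFR, SAMPDFA, dfrl_allPred_iff_dfal]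

end RealizableAgnostic

section Likelihood

lemma bern_true {r : ℝ} (hr : r ∈ Set.Icc (0 : ℝ) 1) : bern r true = ENNReal.ofReal r := by
  simp only [bern, min_eq_left (Real.toNNReal_le_one.mpr hr.2)]
  rfl

lemma bern_false {r : ℝ} (hr : r ∈ Set.Icc (0 : ℝ) 1) :
    bern r false = ENNReal.ofReal (1 - r) := by
  simp only [bern, min_eq_left (Real.toNNReal_le_one.mpr hr.2)]
  show ((1 - r.toNNReal : NNReal) : ℝ≥0∞) = _
  rw [ENNReal.ofReal_sub _ hr.1, ENNReal.ofReal_one, ENNReal.coe_sub, ENNReal.coe_one]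
  rfl

lemma bern_le_of_mem_Icc {a r : ℝ} (ha : a ≤ 1) (hr : r ∈ Set.Icc (1 - a) a) (o : Bool) :
    bern r o ≤ ENNReal.ofReal (2 * a) * bern (1 / 2) o := by
  have hr01 : r ∈ Set.Icc (0 : ℝ) 1 := ⟨by linarith [hr.1], hr.2.trans ha⟩
  have hhalf : (1 / 2 : ℝ) ∈ Set.Icc (0 : ℝ) 1 := by norm_num
  have hscale : ENNReal.ofReal (2 * a) * ENNReal.ofReal (1 / 2) = ENNReal.ofReal a := by
    rw [← ENNReal.ofReal_mul (by linarith [hr.1, hr.2])]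
    ring_nf
  cases o
  · rw [bern_false hr01, bern_false hhalf, show (1 : ℝ) - 1 / 2 = 1 / 2 by norm_num, hscale]
    exact ENNReal.ofReal_le_ofReal (by linarith [hr.1])
  · rw [bern_true hr01, bern_true hhalf, hscale]
    exact ENNReal.ofReal_le_ofReal hr.2

variable {X : Type*} (μ : PMF X) {p q : X → ℝ} {c : ℝ≥0∞}

lemma exDist_apply_le_mul (h : ∀ y o, bern (p y) o ≤ c * bern (q y) o) (z : X × Bool) :
    exDist μ p z ≤ c * exDist μ q z := by
  simp only [exDist, PMF.bind_apply, PMF.map_apply, ← ENNReal.tsum_mul_left]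
  refine ENNReal.tsum_le_tsum fun y => ENNReal.tsum_le_tsum fun o => ?_
  split_ifs
  · rw [mul_left_comm]
    exact mul_le_mul' le_rfl (h y o)
  · simp

lemma prob_outDist_le_pow_mul (h : ∀ y o, bern (p y) o ≤ c * bern (q y) o) {n : ℕ}
    (A : Learner X n) (E : Set (X → ℝ)) :
    prob (outDist μ p A) E ≤ c ^ n * prob (outDist μ q A) E :=
  prob_bind_le_mul (iid_apply_le_pow_mul (exDist_apply_le_mul μ h) n) A E

end Likelihood

section HammingPacking

open Finset

variable {k : ℕ}

lemma card_hammingBall_le (R : ℕ) (t : Fin k → Bool) :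
    #{b : Fin k → Bool | hammingDist t b ≤ R} ≤ ∑ j ∈ range (R + 1), k.choose j := by
  have hinj : Set.InjOn (fun b : Fin k → Bool => ({i | t i ≠ b i} : Finset (Fin k)))
      {b | hammingDist t b ≤ R} := by
    intro b _ b' _ heq
    funext i
    have hi := congrArg (i ∈ ·) heq
    simp only [mem_filter, mem_univ, true_and, eq_iff_iff] at hi
    cases hb : b i <;> cases hb' : b' i <;> cases ht : t i <;> simp_all
  calc #{b : Fin k → Bool | hammingDist t b ≤ R}
      ≤ #((range (R + 1)).biUnion fun j => powersetCard j (univ : Finset (Fin k))) := by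
        refine card_le_card_of_injOn _ (fun b hb => ?_) (by simpa using hinj)
        simp only [coe_filter, mem_univ, true_and, Set.mem_ofPred_eq] at hb
        simp only [coe_biUnion, coe_range, Set.mem_iUnion, Set.mem_Iio, mem_coe,
          mem_powersetCard, subset_univ, true_and]
        exact ⟨hammingDist t b, by omega, rfl⟩
    _ ≤ ∑ j ∈ range (R + 1), #(powersetCard j (univ : Finset (Fin k))) := card_biUnion_le
    _ = ∑ j ∈ range (R + 1), k.choose j := by simp only [card_powersetCard, card_univ,
        Fintype.card_fin]

/-- Gilbert–Varshamov: a maximal `R`-separated code covers the cube by radius-`R` balls. -/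
lemma exists_hamming_packing (R : ℕ) :
    ∃ T : Finset (Fin k → Bool), (∀ t ∈ T, ∀ t' ∈ T, t ≠ t' → R < hammingDist t t') ∧
      2 ^ k ≤ #T * ∑ j ∈ range (R + 1), k.choose j := by
  classical
  let IsPacking : Finset (Fin k → Bool) → Prop :=
    fun T => ∀ t ∈ T, ∀ t' ∈ T, t ≠ t' → R < hammingDist t t'
  obtain ⟨T, hT, hTmax⟩ := exists_max_image {T | IsPacking T} card ⟨∅, by simp [IsPacking]⟩
  replace hT : IsPacking T := (mem_filter.mp hT).2
  refine ⟨T, hT, ?_⟩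
  have hcover : ∀ b, ∃ t ∈ T, hammingDist t b ≤ R := by
    by_contra! hfar
    obtain ⟨b, hb⟩ := hfar
    have hbT : b ∉ T := fun hbT => by simpa using hb b hbT
    have hins : IsPacking (insert b T) := by
      intro t ht t' ht' hne
      rcases mem_insert.mp ht with htb | ht <;> rcases mem_insert.mp ht' with htb' | ht'
      · exact absurd (htb.trans htb'.symm) hne
      · exact htb ▸ hammingDist_comm t' b ▸ hb t' ht'
      · exact htb' ▸ hb t ht
      · exact hT t ht t' ht' hne
    have := hTmax _ (mem_filter.mpr ⟨mem_univ _, hins⟩)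
    rw [card_insert_of_notMem hbT] at this
    omega
  calc 2 ^ k = #(univ : Finset (Fin k → Bool)) := by simp
    _ ≤ #(T.biUnion fun t => ({b | hammingDist t b ≤ R} : Finset (Fin k → Bool))) :=
        card_le_card fun b _ => by simpa using hcover b
    _ ≤ ∑ t ∈ T, #({b | hammingDist t b ≤ R} : Finset (Fin k → Bool)) := card_biUnion_le
    _ ≤ ∑ _t ∈ T, ∑ j ∈ range (R + 1), k.choose j := sum_le_sum fun t _ => card_hammingBall_le R t
    _ = #T * ∑ j ∈ range (R + 1), k.choose j := by rw [sum_const, smul_eq_mul]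

lemma pow_mul_sum_range_choose_le {x : ℝ} (hx0 : 0 ≤ x) (hx1 : x ≤ 1) {R : ℕ} (hR : R ≤ k) :
    x ^ R * ∑ j ∈ range (R + 1), (k.choose j : ℝ) ≤ (1 + x) ^ k := by
  rw [add_comm 1 x, add_pow, mul_sum]
  calc ∑ j ∈ range (R + 1), x ^ R * (k.choose j : ℝ)
      ≤ ∑ j ∈ range (R + 1), x ^ j * 1 ^ (k - j) * k.choose j :=
        sum_le_sum fun j hj => by
          rw [one_pow, mul_one]
          exact mul_le_mul_of_nonneg_right
            (pow_le_pow_of_le_one hx0 hx1 (Nat.lt_succ_iff.mp (mem_range.mp hj))) (by positivity)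
    _ ≤ ∑ j ∈ range (k + 1), x ^ j * 1 ^ (k - j) * k.choose j :=
        sum_le_sum_of_subset_of_nonneg (range_subset_range.mpr (by omega))
          fun _ _ _ => by positivity

lemma sum_range_choose_pow_eight_le (k : ℕ) :
    (∑ j ∈ range (5 * k / 18 + 1), (k.choose j : ℝ)) ^ 8 ≤ 2 ^ (7 * k) := by
  set R := 5 * k / 18
  set V := ∑ j ∈ range (R + 1), (k.choose j : ℝ)
  have hV0 : 0 ≤ V := sum_nonneg fun _ _ => Nat.cast_nonneg _
  have hR : 18 * R ≤ 5 * k := Nat.mul_div_le (5 * k) 18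
  -- `x = 5/13` optimises the bound `(1 + x)^k / x^R` at `R = 5k/18`.
  have hV : (5 / 13 : ℝ) ^ R * V ≤ (18 / 13) ^ k := by
    have := pow_mul_sum_range_choose_le (k := k) (x := 5 / 13) (by norm_num) (by norm_num)
      (R := R) (by omega)
    norm_num at this ⊢
    exact this
  have hconst : (18 / 13 : ℝ) ^ 72 ≤ 2 ^ 63 * (5 / 13) ^ 20 := by
    rw [div_pow, div_pow, mul_div_assoc', div_le_div_iff₀ (by positivity) (by positivity)]
    norm_num
  have h72 : (5 / 13 : ℝ) ^ (20 * k) * V ^ 72 ≤ (5 / 13 : ℝ) ^ (20 * k) * 2 ^ (63 * k) :=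
    calc (5 / 13 : ℝ) ^ (20 * k) * V ^ 72
        ≤ (5 / 13 : ℝ) ^ (R * 72) * V ^ 72 :=
          mul_le_mul_of_nonneg_right (pow_le_pow_of_le_one (by norm_num) (by norm_num)
            (by omega)) (pow_nonneg hV0 72)
      _ = ((5 / 13 : ℝ) ^ R * V) ^ 72 := by rw [mul_pow, pow_mul]
      _ ≤ ((18 / 13 : ℝ) ^ k) ^ 72 := pow_le_pow_left₀ (by positivity) hV 72
      _ = ((18 / 13 : ℝ) ^ 72) ^ k := by rw [← pow_mul, ← pow_mul, mul_comm]
      _ ≤ (2 ^ 63 * (5 / 13 : ℝ) ^ 20) ^ k := pow_le_pow_left₀ (by positivity) hconst k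
      _ = (5 / 13 : ℝ) ^ (20 * k) * 2 ^ (63 * k) := by rw [mul_pow, ← pow_mul, ← pow_mul,
          mul_comm]
  have h72' := le_of_mul_le_mul_left h72 (by positivity)
  rw [show 63 * k = 7 * k * 9 by ring, show 72 = 8 * 9 by rfl, pow_mul, pow_mul] at h72'
  exact (pow_le_pow_iff_left₀ (by positivity) (by positivity) (by norm_num)).mp h72'

end HammingPacking

lemma Shatters.injective {X : Type*} {F : Set (X → ℝ)} {γ : ℝ} {k : ℕ} {x : Fin k → X}
    (hγ : 0 < γ) (h : Shatters F γ x) : Function.Injective x := by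
  obtain ⟨r, hr⟩ := h
  intro i j hij
  by_contra hne
  obtain ⟨f, -, hf⟩ := hr fun l => decide (l = i)
  obtain ⟨f', -, hf'⟩ := hr fun l => decide (l = j)
  have h₁ := hf i
  have h₂ := hf j
  have h₃ := hf' i
  have h₄ := hf' j
  simp only [decide_true, if_true, one_mul, hne, Ne.symm hne, decide_false,
    Bool.false_eq_true, if_false, neg_one_mul, hij] at h₁ h₂ h₃ h₄
  linarith

lemma pexp_uniformOfFinset {α : Type*} (s : Finset α) (hs : s.Nonempty) (h : α → ℝ) :
    pexp (PMF.uniformOfFinset s hs) h = (∑ a ∈ s, h a) / s.card := by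
  rw [pexp, tsum_eq_sum (s := s) fun a ha => by simp [ha], Finset.sum_div]
  refine Finset.sum_congr rfl fun a ha => ?_
  rw [PMF.uniformOfFinset_apply_of_mem (hs := hs) ha, ENNReal.toReal_inv, ENNReal.toReal_natCast,
    inv_mul_eq_div]

section HardInstance

open Finset

variable {X : Type*} {k : ℕ} {x : Fin k → X}

def hardPred (x : Fin k → X) (t : Fin k → Bool) : X → ℝ :=
  Function.extend x (fun i => if t i then 4 / 5 else 1 / 5) fun _ => 1 / 2

lemma hardPred_apply (hx : Function.Injective x) (t : Fin k → Bool) (i : Fin k) :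
    hardPred x t (x i) = if t i then 4 / 5 else 1 / 5 :=
  hx.extend_apply _ _ _

lemma hardPred_mem_Icc (x : Fin k → X) (t : Fin k → Bool) (y : X) :
    hardPred x t y ∈ Set.Icc (1 - 4 / 5 : ℝ) (4 / 5) := by
  classical
  rw [hardPred, Function.extend_def]
  split_ifs <;> norm_num

lemma hardPred_predictor (x : Fin k → X) (t : Fin k → Bool) : Predictor (hardPred x t) :=
  fun y => ⟨by linarith [(hardPred_mem_Icc x t y).1], by linarith [(hardPred_mem_Icc x t y).2]⟩

lemma ite_le_sub_mul_sub_of_margin {b b' : Bool} {u v r γ : ℝ}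
    (hu : γ ≤ (if b then 1 else -1) * (u - r)) (hv : γ ≤ (if b' then 1 else -1) * (v - r)) :
    (if b = b' then 0 else 6 / 5 * γ) ≤
      ((if b then 4 / 5 else 1 / 5) - (if b' then 4 / 5 else 1 / 5)) * (u - v) := by
  cases b <;> cases b' <;> norm_num at hu hv ⊢ <;> linarith

lemma le_dnorm_hardPred_sub [DecidableEq X] {D : Set (X → ℝ)} (hD : ∀ d ∈ D, Dist1 d) {γ : ℝ}
    (hsh : Shatters D γ x) (hx : Function.Injective x) (hs : (univ.image x).Nonempty)
    (t t' : Fin k → Bool) :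
    3 / 5 * γ * hammingDist t t' / k ≤
      dnorm (PMF.uniformOfFinset _ hs) D (hardPred x t - hardPred x t') := by
  set μ := PMF.uniformOfFinset _ hs
  obtain ⟨r, hr⟩ := hsh
  obtain ⟨d, hdD, hd⟩ := hr t
  obtain ⟨d', hd'D, hd'⟩ := hr t'
  have hinn : ∀ g, inn μ (hardPred x t - hardPred x t') g =
      (∑ i, (hardPred x t - hardPred x t') (x i) * g (x i)) / k := fun g => by
    rw [inn, pexp_uniformOfFinset, sum_image fun i _ j _ h => hx h,
      card_image_of_injective _ hx, card_univ, Fintype.card_fin]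
  have hgap : 6 / 5 * γ * hammingDist t t' / k ≤
      inn μ (hardPred x t - hardPred x t') d - inn μ (hardPred x t - hardPred x t') d' := by
    rw [hinn, hinn, ← sub_div, ← sum_sub_distrib]
    gcongr
    calc 6 / 5 * γ * hammingDist t t' = ∑ i, if t i = t' i then 0 else 6 / 5 * γ := by
          rw [sum_ite, sum_const_zero, sum_const, zero_add, nsmul_eq_mul, mul_comm]
          rfl
      _ ≤ _ := sum_le_sum fun i _ => by
          simpa only [Pi.sub_apply, hardPred_apply hx, ← mul_sub] using
            ite_le_sub_mul_sub_of_margin (hd i) (hd' i)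
  have hbound := (hardPred_predictor x t).abs_sub_le_one (hardPred_predictor x t')
  have h₁ := abs_inn_le_dnorm μ hD hbound hdD
  have h₂ := abs_inn_le_dnorm μ hD hbound hd'D
  have := le_abs_self (inn μ (hardPred x t - hardPred x t') d)
  have := neg_abs_le (inn μ (hardPred x t - hardPred x t') d')
  have : 6 / 5 * γ * hammingDist t t' / k = 2 * (3 / 5 * γ * hammingDist t t' / k) := by ring
  linarith

end HardInstance

lemma add_logb_le_of_counting {k n : ℕ} {δ T V : ℝ} (hδ : 0 < 1 - δ) (hT : 0 ≤ T)
    (hTV : 2 ^ k ≤ T * V) (hV : V ^ 8 ≤ 2 ^ (7 * k)) (hTn : T * (1 - δ) ≤ 2 ^ n) :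
    (k : ℝ) / 8 + Real.logb 2 (1 - δ) ≤ n := by
  have hpow : (1 - δ) ^ 8 * 2 ^ k * 2 ^ (7 * k) ≤ 2 ^ (8 * n) * 2 ^ (7 * k) :=
    calc (1 - δ) ^ 8 * 2 ^ k * 2 ^ (7 * k) = ((1 - δ) * 2 ^ k) ^ 8 := by ring
      _ ≤ ((1 - δ) * (T * V)) ^ 8 := pow_le_pow_left₀ (by positivity) (by gcongr) 8
      _ = (T * (1 - δ)) ^ 8 * V ^ 8 := by ring
      _ ≤ (2 ^ n) ^ 8 * 2 ^ (7 * k) :=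
          mul_le_mul (pow_le_pow_left₀ (by positivity) hTn 8) hV (by positivity) (by positivity)
      _ = 2 ^ (8 * n) * 2 ^ (7 * k) := by ring
  have hlog := (Real.logb_le_logb (b := 2) (by norm_num) (by positivity) (by positivity)).mpr
    (le_of_mul_le_mul_right hpow (by positivity))
  rw [Real.logb_mul (by positivity) (by positivity), Real.logb_pow, Real.logb_pow,
    Real.logb_pow, Real.logb_self_eq_one (by norm_num)] at hlog
  push_cast at hlog
  linarith

open Finset in
lemma add_logb_le_of_shatters_of_pos {X : Type*} {D : Set (X → ℝ)} (hD : ∀ d ∈ D, Dist1 d)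
    {ε δ : ℝ} (hε : 0 < ε) (hδ : δ < 1) {k : ℕ} (hk : 0 < k) {x : Fin k → X}
    (hsh : Shatters D (12 * ε) x) {n : ℕ} {A : Learner X n}
    (hA : DFRL (allPred X) D ε δ n A) :
    (k : ℝ) / 8 + Real.logb 2 (1 - δ) ≤ n := by
  classical
  have hx := hsh.injective (by positivity)
  have hs : (univ.image x).Nonempty := ⟨x ⟨0, hk⟩, mem_image_of_mem x (mem_univ _)⟩
  set μ := PMF.uniformOfFinset _ hs
  let E : (Fin k → Bool) → Set (X → ℝ) :=
    fun t => {p | Predictor p ∧ dnorm μ D (p - hardPred x t) ≤ ε}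
  obtain ⟨T, hTfar, hTcard⟩ := exists_hamming_packing (k := k) (5 * k / 18)
  have hdisj : (T : Set (Fin k → Bool)).PairwiseDisjoint E := by
    intro t ht t' ht' hne
    refine Set.disjoint_left.mpr fun p ⟨hp, hpt⟩ ⟨_, hpt'⟩ => ?_
    have hfar : 5 * k < 18 * hammingDist t t' := by
      have := hTfar t ht t' ht' hne
      rw [Nat.div_lt_iff_lt_mul (by norm_num)] at this
      omega
    have hclose := (le_dnorm_hardPred_sub hD hsh hx hs t t').trans
      ((dnorm_sub_le μ hD hp (hardPred_predictor x t) (hardPred_predictor x t')).trans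
        (add_le_add hpt hpt'))
    rw [div_le_iff₀ (by positivity)] at hclose
    have : (18 * hammingDist t t' : ℝ) ≤ 5 * k := by nlinarith
    exact absurd hfar (by exact_mod_cast this.not_gt)
  have hcount : (#T : ℝ≥0∞) * ENNReal.ofReal (1 - δ) ≤ ENNReal.ofReal (2 * (4 / 5)) ^ n :=
    calc (#T : ℝ≥0∞) * ENNReal.ofReal (1 - δ) = ∑ _t ∈ T, ENNReal.ofReal (1 - δ) := by
          rw [sum_const, nsmul_eq_mul]
      _ ≤ ∑ t ∈ T, prob (outDist μ (hardPred x t) A) (E t) :=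
          sum_le_sum fun t _ => hA μ _ (hardPred_predictor x t)
      _ ≤ ∑ t ∈ T, ENNReal.ofReal (2 * (4 / 5)) ^ n *
            prob (outDist μ (fun _ => 1 / 2) A) (E t) :=
          sum_le_sum fun t _ => prob_outDist_le_pow_mul μ
            (fun y => bern_le_of_mem_Icc (by norm_num) (hardPred_mem_Icc x t y)) A (E t)
      _ = ENNReal.ofReal (2 * (4 / 5)) ^ n * ∑ t ∈ T, prob (outDist μ (fun _ => 1 / 2) A) (E t) :=
          (mul_sum _ _ _).symm
      _ ≤ ENNReal.ofReal (2 * (4 / 5)) ^ n := mul_le_of_le_one_right' (sum_prob_le_one _ hdisj)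
  have hreal : (#T : ℝ) * (1 - δ) ≤ 2 ^ n := by
    rw [← ENNReal.ofReal_natCast, ← ENNReal.ofReal_mul (Nat.cast_nonneg _),
      ← ENNReal.ofReal_pow (by norm_num), ENNReal.ofReal_le_ofReal_iff (by positivity)] at hcount
    exact hcount.trans (pow_le_pow_left₀ (by norm_num) (by norm_num) n)
  exact add_logb_le_of_counting (by linarith) (Nat.cast_nonneg _) (by exact_mod_cast hTcard)
    (sum_range_choose_pow_eight_le k) hreal

lemma add_logb_le_of_shatters {X : Type*} {D : Set (X → ℝ)} (hD : ∀ d ∈ D, Dist1 d)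
    {ε δ : ℝ} (hε : 0 < ε) (hδ : δ ∈ Set.Ioo (0 : ℝ) 1) {k : ℕ} {x : Fin k → X}
    (hsh : Shatters D (12 * ε) x) {n : ℕ} {A : Learner X n}
    (hA : DFRL (allPred X) D ε δ n A) :
    (k : ℝ) / 8 + Real.logb 2 (1 - δ) ≤ n := by
  rcases Nat.eq_zero_or_pos k with rfl | hk
  · have := Real.logb_nonpos (b := 2) (x := 1 - δ) (by norm_num) (by linarith [hδ.2])
      (by linarith [hδ.1])
    simp only [CharP.cast_eq_zero, zero_div, zero_add]
    exact this.trans (Nat.cast_nonneg n)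
  · exact add_logb_le_of_shatters_of_pos hD hε hδ.2 hk hsh hA

end OI

open OI

theorem statement_13_general {X : Type} (D : Set (X → ℝ))
    (hD : ∀ d ∈ D, Dist1 d)
    (ε δ : ℝ) (hε : 0 < ε) (hδ : δ ∈ Set.Ioo (0 : ℝ) 1) :
    SAMPDFR (allPred X) D ε δ = SAMPDFA (allPred X) D ε δ ∧
      ∀ (k : ℕ) (x : Fin k → X), Shatters D (12 * ε) x →
        ∀ (n : ℕ) (A : Learner X n), DFRL (allPred X) D ε δ n A →
          (k : ℝ) / 8 + Real.logb 2 (1 - δ) ≤ (n : ℝ) :=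
  ⟨sampDFR_allPred_eq_sampDFA, fun _ _ hsh _ _ hA => add_logb_le_of_shatters hD hε hδ hsh hA⟩

/-- sample complexity lower bound for distribution-free OI with `P = [0,1]^X`:
`SAMP-DF-R = SAMP-DF-A ≥ fat_D(12ε)/8 + log(1−δ)`, phrased via any `12ε`-fat-shattered tuple
and any distribution-free realizable learner. -/
theorem statement_13 {X : Type} [Nonempty X] (D : Set (X → ℝ))
    (hDne : D.Nonempty) (hD : ∀ d ∈ D, Dist1 d)
    (ε δ : ℝ) (hε : 0 < ε) (hδ : δ ∈ Set.Ioo (0 : ℝ) 1) :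
    SAMPDFR (allPred X) D ε δ = SAMPDFA (allPred X) D ε δ ∧
      ∀ (k : ℕ) (x : Fin k → X), Shatters D (12 * ε) x →
        ∀ (n : ℕ) (A : Learner X n), DFRL (allPred X) D ε δ n A →
          (k : ℝ) / 8 + Real.logb 2 (1 - δ) ≤ (n : ℝ) :=
  statement_13_general D hD ε δ hε hδ
end
end

section
/- Assume the distinguisher class D ⊆ [−1,1]^X satisfies {−1,1}^X ⊆ D. For every predictor class P ⊆ [0,1]^X, every distribution μ over X, every advantage bound ε ∈ (0,1), and every failure probability bound δ ∈ (0,1), there exist a positive integer n with n = O( ( log N_{μ,D}(P, ε/2) + log(2/δ) ) / ε² ) and an n-sample learner such that for every target predictor p* ∈ [0,1]^X with the property that P ⊆ {0,1}^X or p* ∈ {0,1}^X, given n i.i.d. examples from μ_{p*}, the learner outputs a predictor p with ‖p − p*‖_{μ,D} ≤ inf_{p'∈P} ‖p' − p*‖_{μ,D} + ε with probability at least 1 − δ. -/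
open scoped ENNReal Pointwise

noncomputable section

open OI

/-!
If `D` contains every `±1`-valued function, `‖h‖_{μ,D}` is the `L¹(μ)` norm of `h`; and if the
predictor `p` or the target `p*` is `{0,1}`-valued, `‖p - p*‖_{L¹(μ)}` is the expected absolute
loss `|p(x) - o|` over examples `(x, o) ∼ μ_{p*}`. The distinguishing advantage of a predictor is
therefore a risk that samples estimate, and the learner is empirical risk minimisation over a
minimum `ε/2`-cover `C` of `P`. A Chernoff bound and a union bound over `C` make every empirical
risk `ε/4`-accurate with probability `1 - δ` once `n ≳ (log |C| + log (2/δ)) / ε²`; then the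
minimiser is `ε/2`-close to the best element of `C`, hence `ε`-close to the best predictor in `P`.
-/

namespace OI

open Real

section Expectation

variable {α β : Type*}

def lexp (q : PMF α) (g : α → ℝ≥0∞) : ℝ≥0∞ := ∑' a, q a * g a

theorem lexp_const_mul (q : PMF α) (c : ℝ≥0∞) (g : α → ℝ≥0∞) :
    lexp q (fun a => c * g a) = c * lexp q g := by
  simp only [lexp, ← ENNReal.tsum_mul_left, mul_left_comm]

theorem lexp_bind (q : PMF α) (k : α → PMF β) (g : β → ℝ≥0∞) :
    lexp (q.bind k) g = lexp q fun a => lexp (k a) g := by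
  simp only [lexp, PMF.bind_apply, ← ENNReal.tsum_mul_right, ← ENNReal.tsum_mul_left, mul_assoc]
  exact ENNReal.tsum_comm

theorem lexp_pure (a : α) (g : α → ℝ≥0∞) : lexp (PMF.pure a) g = g a := by
  simp [lexp, PMF.pure_apply]

theorem lexp_map (q : PMF α) (f : α → β) (g : β → ℝ≥0∞) :
    lexp (q.map f) g = lexp q (g ∘ f) := by
  simp only [PMF.map, lexp_bind, Function.comp_apply, lexp_pure]
  rfl

theorem lexp_iid_prod (q : PMF α) (h : α → ℝ≥0∞) (n : ℕ) :
    lexp (iid q n) (fun s => ∏ i, h (s i)) = lexp q h ^ n := by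
  induction n with
  | zero => simp [iid, lexp_pure]
  | succ n ih =>
    have hcons (v : Fin n → α) :
        lexp (q.map fun a => Fin.cons a v) (fun s => ∏ i, h (s i)) =
          lexp q h * ∏ i, h (v i) := by
      simp only [lexp_map, Function.comp_def, Fin.prod_univ_succ, Fin.cons_zero, Fin.cons_succ]
      simp only [lexp, ← ENNReal.tsum_mul_right, mul_assoc]
    simp only [iid, lexp_bind, hcons, lexp_const_mul, ih, pow_succ, mul_comm]

theorem toOuterMeasure_le_lexp (q : PMF α) {E : Set α} {g : α → ℝ≥0∞}
    (hg : ∀ a ∈ E, 1 ≤ g a) : q.toOuterMeasure E ≤ lexp q g := by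
  rw [PMF.toOuterMeasure_apply]
  refine ENNReal.tsum_le_tsum fun a => ?_
  by_cases ha : a ∈ E
  · simpa [ha] using mul_le_mul_right (hg a ha) (q a)
  · simp [ha]

theorem ofReal_one_sub_le_of_compl_le (q : PMF α) {G : Set α} {δ : ℝ} (hδ : 0 ≤ δ)
    (hG : q.toOuterMeasure Gᶜ ≤ ENNReal.ofReal δ) :
    ENNReal.ofReal (1 - δ) ≤ q.toOuterMeasure G := by
  have hone : 1 ≤ q.toOuterMeasure G + ENNReal.ofReal δ := calc
    1 = q.toOuterMeasure (G ∪ Gᶜ) := by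
        rw [Set.union_compl_self, (q.toOuterMeasure_apply_eq_one_iff _).2 (Set.subset_univ _)]
    _ ≤ q.toOuterMeasure G + q.toOuterMeasure Gᶜ := MeasureTheory.measure_union_le G Gᶜ
    _ ≤ q.toOuterMeasure G + ENNReal.ofReal δ := by gcongr
  rw [ENNReal.ofReal_sub 1 hδ, ENNReal.ofReal_one]
  exact tsub_le_iff_right.2 hone

end Expectation

section RealExpectation

variable {α : Type*} (q : PMF α)

theorem summable_toReal_mul {f : α → ℝ} {B : ℝ} (hf : ∀ a, |f a| ≤ B) :
    Summable fun a => (q a).toReal * f a := by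
  have hw : Summable fun a => (q a).toReal := ENNReal.summable_toReal q.tsum_coe_ne_top
  refine .of_norm_bounded (hw.mul_right B) fun a => ?_
  rw [Real.norm_eq_abs, abs_mul, ENNReal.abs_toReal]
  exact mul_le_mul_of_nonneg_left (hf a) ENNReal.toReal_nonneg

theorem pexp_const (c : ℝ) : pexp q (fun _ => c) = c := by
  rw [pexp, tsum_mul_right, ← ENNReal.tsum_toReal_eq q.apply_ne_top, q.tsum_coe,
    ENNReal.toReal_one, one_mul]

theorem pexp_const_mul (c : ℝ) (f : α → ℝ) : pexp q (fun a => c * f a) = c * pexp q f := by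
  simp only [pexp, ← tsum_mul_left, mul_left_comm]

variable {q} {f g h : α → ℝ} {B Bf Bg : ℝ}

theorem pexp_nonneg (hf : ∀ a, 0 ≤ f a) : 0 ≤ pexp q f :=
  tsum_nonneg fun a => mul_nonneg ENNReal.toReal_nonneg (hf a)

theorem pexp_mono (hf : ∀ a, |f a| ≤ Bf) (hg : ∀ a, |g a| ≤ Bg) (hfg : ∀ a, f a ≤ g a) :
    pexp q f ≤ pexp q g :=
  (summable_toReal_mul q hf).tsum_le_tsum
    (fun a => mul_le_mul_of_nonneg_left (hfg a) ENNReal.toReal_nonneg) (summable_toReal_mul q hg)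

theorem pexp_add (hf : ∀ a, |f a| ≤ Bf) (hg : ∀ a, |g a| ≤ Bg) :
    pexp q (fun a => f a + g a) = pexp q f + pexp q g := by
  simp only [pexp, mul_add]
  exact (summable_toReal_mul q hf).tsum_add (summable_toReal_mul q hg)

theorem pexp_sub_s15 (hf : ∀ a, |f a| ≤ Bf) (hg : ∀ a, |g a| ≤ Bg) :
    pexp q (fun a => f a - g a) = pexp q f - pexp q g := by
  simp only [pexp, mul_sub]
  exact (summable_toReal_mul q hf).tsum_sub (summable_toReal_mul q hg)

theorem abs_pexp_le_pexp_abs (hf : ∀ a, |f a| ≤ B) : |pexp q f| ≤ pexp q fun a => |f a| := by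
  refine (norm_tsum_le_tsum_norm (summable_toReal_mul q hf).norm).trans_eq
    (tsum_congr fun a => ?_)
  rw [Real.norm_eq_abs, abs_mul, ENNReal.abs_toReal]

theorem pexp_abs_sub_le (hf : ∀ a, |f a| ≤ B) (hg : ∀ a, |g a| ≤ B) (hh : ∀ a, |h a| ≤ B) :
    (pexp q fun a => |f a - h a|) ≤
      (pexp q fun a => |f a - g a|) + pexp q fun a => |g a - h a| := by
  have hdiff {u v : α → ℝ} (hu : ∀ a, |u a| ≤ B) (hv : ∀ a, |v a| ≤ B) (a : α) :
      |(|u a - v a|)| ≤ B + B := by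
    rw [abs_abs]; exact (abs_sub _ _).trans (add_le_add (hu a) (hv a))
  have hsum (a : α) : |(|f a - g a| + |g a - h a|)| ≤ (B + B) + (B + B) := by
    rw [abs_of_nonneg (by positivity)]
    exact add_le_add ((le_abs_self _).trans (hdiff hf hg a))
      ((le_abs_self _).trans (hdiff hg hh a))
  rw [← pexp_add (hdiff hf hg) (hdiff hg hh)]
  exact pexp_mono (hdiff hf hh) hsum fun a => abs_sub_le _ _ _

theorem lexp_ofReal (hf0 : ∀ a, 0 ≤ f a) (hf : ∀ a, f a ≤ B) :
    lexp q (fun a => ENNReal.ofReal (f a)) = ENNReal.ofReal (pexp q f) := by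
  rw [pexp, ENNReal.ofReal_tsum_of_nonneg (fun a => mul_nonneg ENNReal.toReal_nonneg (hf0 a))
    (summable_toReal_mul q fun a => (abs_of_nonneg (hf0 a)).trans_le (hf a))]
  simp only [lexp, ENNReal.ofReal_mul ENNReal.toReal_nonneg,
    ENNReal.ofReal_toReal (q.apply_ne_top _)]

end RealExpectation

section Concentration

variable {α : Type*} (q : PMF α)

theorem pexp_exp_mul_le {g : α → ℝ} (hg : ∀ a, |g a| ≤ 1) (hg0 : pexp q g = 0) {t : ℝ}
    (ht : |t| ≤ 1) : pexp q (fun a => exp (t * g a)) ≤ exp (t ^ 2) := by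
  have htg (a : α) : |t * g a| ≤ 1 := by
    rw [abs_mul]; exact mul_le_one₀ ht (abs_nonneg _) (hg a)
  -- `exp y ≤ 1 + y + y²` on `[-1, 1]`, and `(t g)² ≤ t²`
  have hquad (a : α) : exp (t * g a) ≤ (1 + t ^ 2) + t * g a := by
    have h := (abs_le.1 (abs_exp_sub_one_sub_id_le (htg a))).2
    have : (t * g a) ^ 2 ≤ t ^ 2 := by
      rw [mul_pow]
      exact mul_le_of_le_one_right (sq_nonneg t) (by nlinarith [abs_le.1 (hg a), sq_abs (g a)])
    linarith
  calc pexp q (fun a => exp (t * g a))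
      ≤ pexp q (fun a => (1 + t ^ 2) + t * g a) :=
        pexp_mono (Bf := exp 1) (Bg := |1 + t ^ 2| + 1)
          (fun a => by rw [abs_exp]; exact exp_le_exp.2 ((le_abs_self _).trans (htg a)))
          (fun a => (abs_add_le _ _).trans (by gcongr; exact htg a)) hquad
    _ = 1 + t ^ 2 := by
        rw [pexp_add (Bf := |1 + t ^ 2|) (Bg := 1) (fun _ => le_rfl) htg, pexp_const,
          pexp_const_mul, hg0, mul_zero, add_zero]
    _ ≤ exp (t ^ 2) := by linarith [add_one_le_exp (t ^ 2)]

theorem lexp_ofReal_exp_mul_le {g : α → ℝ} (hg : ∀ a, |g a| ≤ 1) (hg0 : pexp q g = 0) {t : ℝ}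
    (ht : |t| ≤ 1) :
    lexp q (fun a => ENNReal.ofReal (exp (t * g a))) ≤ ENNReal.ofReal (exp (t ^ 2)) := by
  rw [lexp_ofReal (B := exp 1) (fun a => (exp_pos _).le) fun a => exp_le_exp.2 ?_]
  · exact ENNReal.ofReal_le_ofReal (pexp_exp_mul_le q hg hg0 ht)
  · exact (le_abs_self _).trans (by rw [abs_mul]; exact mul_le_one₀ ht (abs_nonneg _) (hg a))

theorem toOuterMeasure_iid_sum_ge_le {g : α → ℝ} (hg : ∀ a, |g a| ≤ 1) (hg0 : pexp q g = 0)
    (n : ℕ) {η : ℝ} (hη0 : 0 ≤ η) (hη2 : η ≤ 2) :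
    (iid q n).toOuterMeasure {s | n * η ≤ ∑ i, g (s i)} ≤
      ENNReal.ofReal (exp (-(n * η ^ 2 / 4))) := by
  set t := η / 2 with ht_def
  have ht : |t| ≤ 1 := by rw [abs_of_nonneg (by positivity)]; linarith
  set c := ENNReal.ofReal (exp (-(t * (n * η))))
  have hprod (s : Fin n → α) :
      c * ∏ i, ENNReal.ofReal (exp (t * g (s i))) =
        ENNReal.ofReal (exp (t * (∑ i, g (s i) - n * η))) := by
    rw [← ENNReal.ofReal_prod_of_nonneg fun i _ => (exp_pos _).le, ← exp_sum,
      ← ENNReal.ofReal_mul (exp_pos _).le, ← exp_add, ← Finset.mul_sum]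
    ring_nf
  calc (iid q n).toOuterMeasure {s | n * η ≤ ∑ i, g (s i)}
      ≤ lexp (iid q n) (fun s => c * ∏ i, ENNReal.ofReal (exp (t * g (s i)))) := by
        refine toOuterMeasure_le_lexp _ fun s hs => ?_
        rw [hprod, ← ENNReal.ofReal_one]
        exact ENNReal.ofReal_le_ofReal
          (one_le_exp (mul_nonneg (by positivity) (sub_nonneg.2 hs)))
    _ = c * lexp q (fun a => ENNReal.ofReal (exp (t * g a))) ^ n := by
        rw [lexp_const_mul, lexp_iid_prod q (fun a => ENNReal.ofReal (exp (t * g a)))]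
    _ ≤ c * ENNReal.ofReal (exp (t ^ 2)) ^ n := by
        gcongr; exact lexp_ofReal_exp_mul_le q hg hg0 ht
    _ = ENNReal.ofReal (exp (-(n * η ^ 2 / 4))) := by
        rw [← ENNReal.ofReal_pow (exp_pos _).le, ← ENNReal.ofReal_mul (exp_pos _).le,
          ← exp_nat_mul, ← exp_add, ht_def]
        ring_nf

theorem toOuterMeasure_iid_abs_sum_sub_ge_le {f : α → ℝ} (hf : ∀ a, f a ∈ Set.Icc (0 : ℝ) 1)
    (n : ℕ) {η : ℝ} (hη0 : 0 ≤ η) (hη2 : η ≤ 2) :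
    (iid q n).toOuterMeasure {s | n * η ≤ |∑ i, f (s i) - n * pexp q f|} ≤
      2 * ENNReal.ofReal (exp (-(n * η ^ 2 / 4))) := by
  set m := pexp q f
  have hf1 (a : α) : |f a| ≤ 1 := abs_le.2 ⟨by linarith [(hf a).1], (hf a).2⟩
  have hm : m ∈ Set.Icc (0 : ℝ) 1 := ⟨pexp_nonneg fun a => (hf a).1,
    (pexp_mono hf1 (fun _ => le_rfl) fun a => (hf a).2).trans_eq (pexp_const q 1)⟩
  have hm1 : |m| ≤ 1 := abs_le.2 ⟨by linarith [hm.1], hm.2⟩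
  have hdev (a : α) : |f a - m| ≤ 1 := abs_sub_le_of_nonneg_of_le (hf a).1 (hf a).2 hm.1 hm.2
  have hdev' (a : α) : |m - f a| ≤ 1 := abs_sub_comm m (f a) ▸ hdev a
  have hcentred : pexp q (fun a => f a - m) = 0 := by
    rw [pexp_sub_s15 hf1 (fun _ => hm1), pexp_const, sub_self]
  have hcentred' : pexp q (fun a => m - f a) = 0 := by
    rw [pexp_sub_s15 (fun _ => hm1) hf1, pexp_const, sub_self]
  have hsplit : {s : Fin n → α | n * η ≤ |∑ i, f (s i) - n * m|} ⊆
      {s | n * η ≤ ∑ i, (f (s i) - m)} ∪ {s | n * η ≤ ∑ i, (m - f (s i))} := by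
    intro s hs
    rw [Set.mem_ofPred_eq, le_abs] at hs
    simp only [Set.mem_union, Set.mem_ofPred_eq, Finset.sum_sub_distrib]
    simpa using hs
  calc _ ≤ _ := MeasureTheory.measure_mono hsplit
    _ ≤ _ := MeasureTheory.measure_union_le _ _
    _ ≤ _ := add_le_add (toOuterMeasure_iid_sum_ge_le q hdev hcentred n hη0 hη2)
          (toOuterMeasure_iid_sum_ge_le q hdev' hcentred' n hη0 hη2)
    _ = _ := (two_mul _).symm

theorem toOuterMeasure_iid_exists_abs_sum_sub_ge_le {ι : Type*} (C : Finset ι)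
    (f : ι → α → ℝ) (hf : ∀ c ∈ C, ∀ a, f c a ∈ Set.Icc (0 : ℝ) 1) (n : ℕ) {η : ℝ}
    (hη0 : 0 ≤ η) (hη2 : η ≤ 2) :
    (iid q n).toOuterMeasure (⋃ c ∈ C, {s | n * η ≤ |∑ i, f c (s i) - n * pexp q (f c)|}) ≤
      C.card * (2 * ENNReal.ofReal (exp (-(n * η ^ 2 / 4)))) :=
  (MeasureTheory.measure_biUnion_finset_le _ _).trans <|
    (Finset.sum_le_card_nsmul _ _ _ fun c hc =>
      toOuterMeasure_iid_abs_sum_sub_ge_le q (hf c hc) n hη0 hη2).trans_eq (nsmul_eq_mul _ _)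

end Concentration

section DualNorm

variable {X : Type*} {μ : PMF X} {D : Set (X → ℝ)}

theorem Predictor.abs_le_one {p : X → ℝ} (hp : Predictor p) (x : X) : |p x| ≤ 1 :=
  abs_le.2 ⟨by linarith [(hp x).1], (hp x).2⟩

theorem Predictor.abs_sub_le_one_s15 {a b : X → ℝ} (ha : Predictor a) (hb : Predictor b) (x : X) :
    |a x - b x| ≤ 1 :=
  abs_sub_le_of_nonneg_of_le (ha x).1 (ha x).2 (hb x).1 (hb x).2

theorem abs_inn_le_pexp_abs {h d : X → ℝ} {B : ℝ} (hd : Dist1 d) (hh : ∀ x, |h x| ≤ B) :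
    |inn μ h d| ≤ pexp μ fun x => |h x| := by
  have hhd (x : X) : |h x * d x| ≤ |h x| := by
    rw [abs_mul]; exact mul_le_of_le_one_right (abs_nonneg _) (abs_le.2 (hd x))
  exact (abs_pexp_le_pexp_abs fun x => (hhd x).trans (hh x)).trans
    (pexp_mono (fun x => by rw [abs_abs]; exact (hhd x).trans (hh x))
      (fun x => by rw [abs_abs]; exact hh x) hhd)

theorem dnorm_eq_pexp_abs (hD : ∀ d ∈ D, Dist1 d)
    (hsgn : {d : X → ℝ | ∀ x, d x = 1 ∨ d x = -1} ⊆ D) {h : X → ℝ} {B : ℝ}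
    (hh : ∀ x, |h x| ≤ B) : dnorm μ D h = pexp μ fun x => |h x| := by
  have hbound : ∀ y ∈ (fun d => |inn μ h d|) '' D, y ≤ pexp μ fun x => |h x| := by
    rintro _ ⟨d, hd, rfl⟩
    exact abs_inn_le_pexp_abs (hD d hd) hh
  refine le_antisymm (Real.sSup_le hbound (pexp_nonneg fun _ => abs_nonneg _)) ?_
  let sgn : X → ℝ := fun x => if 0 ≤ h x then 1 else -1
  have hsgnD : sgn ∈ D := hsgn fun x => by by_cases hx : 0 ≤ h x <;> simp [sgn, hx]
  have hinn : inn μ h sgn = pexp μ fun x => |h x| := by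
    refine congrArg (pexp μ) (funext fun x => ?_)
    by_cases hx : 0 ≤ h x
    · simp [sgn, hx, abs_of_nonneg hx]
    · simp [sgn, hx, abs_of_neg (not_le.1 hx)]
  calc (pexp μ fun x => |h x|) = |inn μ h sgn| := by
        rw [hinn, abs_of_nonneg (pexp_nonneg fun _ => abs_nonneg _)]
    _ ≤ dnorm μ D h := le_csSup ⟨_, hbound⟩ ⟨sgn, hsgnD, rfl⟩

theorem dnorm_sub_eq_pexp_abs_sub (hD : ∀ d ∈ D, Dist1 d)
    (hsgn : {d : X → ℝ | ∀ x, d x = 1 ∨ d x = -1} ⊆ D) {a b : X → ℝ} (ha : Predictor a)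
    (hb : Predictor b) : dnorm μ D (a - b) = pexp μ fun x => |a x - b x| :=
  dnorm_eq_pexp_abs hD hsgn (ha.abs_sub_le_one_s15 hb)

end DualNorm

section AbsLoss

variable {X : Type*} (μ : PMF X)

theorem lexp_bern {r : ℝ} (hr : r ∈ Set.Icc (0 : ℝ) 1) (g : Bool → ℝ≥0∞) :
    lexp (bern r) g = ENNReal.ofReal r * g true + ENNReal.ofReal (1 - r) * g false := by
  have hmin : min r.toNNReal 1 = r.toNNReal := min_eq_left (Real.toNNReal_le_one.2 hr.2)
  have h1 : bern r true = ENNReal.ofReal r := by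
    simp only [bern, hmin]; rfl
  have h0 : bern r false = ENNReal.ofReal (1 - r) := by
    rw [ENNReal.ofReal_sub 1 hr.1, ENNReal.ofReal_one]
    simp only [bern, hmin]; rfl
  rw [lexp, tsum_bool, add_comm, h1, h0]

def absLoss (c : X → ℝ) (z : X × Bool) : ℝ := |c z.1 - if z.2 then 1 else 0|

theorem absLoss_mem_Icc {c : X → ℝ} (hc : Predictor c) (z : X × Bool) :
    absLoss c z ∈ Set.Icc (0 : ℝ) 1 := by
  obtain ⟨x, _ | _⟩ := z <;>
  · refine ⟨abs_nonneg _, abs_le.2 ⟨?_, ?_⟩⟩ <;> simp <;> linarith [(hc x).1, (hc x).2]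

-- This is where the binary hypothesis enters: in general the left side only bounds `|c - r|`
-- from above.
theorem mul_abs_sub_one_add_mul_abs {c r : ℝ} (hc : c ∈ Set.Icc (0 : ℝ) 1)
    (hr : r ∈ Set.Icc (0 : ℝ) 1) (hbin : (c = 0 ∨ c = 1) ∨ (r = 0 ∨ r = 1)) :
    r * |c - 1| + (1 - r) * |c - 0| = |c - r| := by
  rcases hbin with (rfl | rfl) | (rfl | rfl)
  · simp [abs_of_nonneg hr.1]
  · simp [abs_of_nonneg (sub_nonneg.2 hr.2)]
  · simp [abs_of_nonneg hc.1]
  · simp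

theorem pexp_exDist_absLoss {c pstar : X → ℝ} (hc : Predictor c) (hp : Predictor pstar)
    (hbin : ∀ x, (c x = 0 ∨ c x = 1) ∨ (pstar x = 0 ∨ pstar x = 1)) :
    pexp (exDist μ pstar) (absLoss c) = pexp μ fun x => |c x - pstar x| := by
  have hp1 (x : X) : 0 ≤ 1 - pstar x := sub_nonneg.2 (hp x).2
  rw [← ENNReal.ofReal_eq_ofReal_iff (pexp_nonneg fun z => (absLoss_mem_Icc hc z).1)
      (pexp_nonneg fun _ => abs_nonneg _),
    ← lexp_ofReal (fun z => (absLoss_mem_Icc hc z).1) fun z => (absLoss_mem_Icc hc z).2,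
    ← lexp_ofReal (fun _ => abs_nonneg _) (hc.abs_sub_le_one_s15 hp), exDist, lexp_bind]
  refine congrArg (lexp μ) (funext fun x => ?_)
  rw [lexp_map, lexp_bern (hp x), Function.comp_apply, Function.comp_apply,
    ← ENNReal.ofReal_mul (hp x).1, ← ENNReal.ofReal_mul (hp1 x),
    ← ENNReal.ofReal_add (mul_nonneg (hp x).1 (absLoss_mem_Icc hc _).1)
      (mul_nonneg (hp1 x) (absLoss_mem_Icc hc _).1)]
  exact congrArg ENNReal.ofReal (mul_abs_sub_one_add_mul_abs (hc x) (hp x) (hbin x))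

end AbsLoss

section ERM

variable {X : Type*} {μ : PMF X} {P D : Set (X → ℝ)} {C : Finset (X → ℝ)} {ε δ : ℝ}
  {pstar : X → ℝ}

theorem exists_finset_isCover_card_eq {F G : Set (X → ℝ)} (h : covN μ F G ε ≠ ⊤) :
    ∃ C : Finset (X → ℝ), IsCover μ F G ε C ∧ (C.card : ℕ∞) = covN μ F G ε := by
  obtain ⟨C, hC⟩ :=
    ENat.exists_eq_iInf fun C : Set (X → ℝ) => ⨅ (_ : IsCover μ F G ε C), C.encard
  by_cases hcov : IsCover μ F G ε C
  · rw [iInf_pos hcov] at hC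
    have hfin : C.Finite := Set.encard_ne_top_iff.1 (hC ▸ h)
    refine ⟨hfin.toFinset, by rwa [hfin.coe_toFinset], ?_⟩
    rw [← hfin.encard_eq_coe_toFinset_card, hC]
    rfl
  · rw [iInf_neg hcov] at hC
    exact absurd hC.symm h

def erm (C : Finset (X → ℝ)) (hC : C.Nonempty) {n : ℕ} (s : Fin n → X × Bool) : X → ℝ :=
  (C.exists_min_image (fun c => ∑ i, absLoss c (s i)) hC).choose

theorem erm_mem (C : Finset (X → ℝ)) (hC : C.Nonempty) {n : ℕ} (s : Fin n → X × Bool) :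
    erm C hC s ∈ C :=
  (C.exists_min_image (fun c => ∑ i, absLoss c (s i)) hC).choose_spec.1

theorem sum_absLoss_erm_le (C : Finset (X → ℝ)) (hC : C.Nonempty) {n : ℕ}
    (s : Fin n → X × Bool) {c : X → ℝ} (hc : c ∈ C) :
    ∑ i, absLoss (erm C hC s) (s i) ≤ ∑ i, absLoss c (s i) :=
  (C.exists_min_image (fun c => ∑ i, absLoss c (s i)) hC).choose_spec.2 c hc

def ermLearner (C : Finset (X → ℝ)) (hC : C.Nonempty) (n : ℕ) : Learner X n :=
  fun s => PMF.pure (erm C hC s)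

theorem dnorm_erm_sub_le_agTarget_add (hP : ∀ p ∈ P, Predictor p) (hD : ∀ d ∈ D, Dist1 d)
    (hsgn : {d : X → ℝ | ∀ x, d x = 1 ∨ d x = -1} ⊆ D) (hC : IsCover μ D P (ε / 2) C)
    (hCne : C.Nonempty) (hps : Predictor pstar)
    (hbin : ∀ c ∈ C, ∀ x, (c x = 0 ∨ c x = 1) ∨ (pstar x = 0 ∨ pstar x = 1))
    {n : ℕ} {s : Fin n → X × Bool}
    (hs : ∀ c ∈ C,
      |∑ i, absLoss c (s i) - n * pexp (exDist μ pstar) (absLoss c)| < n * (ε / 4)) :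
    dnorm μ D (erm C hCne s - pstar) ≤ agTarget μ P D pstar + ε := by
  set R := fun c => pexp (exDist μ pstar) (absLoss c)
  set ĉ := erm C hCne s
  have hĉ : ĉ ∈ C := erm_mem C hCne s
  have hpred {c} (hc : c ∈ C) : Predictor c := hP c (hC.1 hc)
  have hR {c} (hc : c ∈ C) : R c = dnorm μ D (c - pstar) := by
    rw [dnorm_sub_eq_pexp_abs_sub hD hsgn (hpred hc) hps]
    exact pexp_exDist_absLoss μ (hpred hc) hps (hbin c hc)
  have hERM {c} (hc : c ∈ C) : R ĉ ≤ R c + ε / 2 := by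
    have h1 := abs_lt.1 (hs ĉ hĉ)
    have h2 := abs_lt.1 (hs c hc)
    have h3 := sum_absLoss_erm_le C hCne s hc
    refine le_of_lt (lt_of_mul_lt_mul_left ?_ (Nat.cast_nonneg n))
    linarith
  rw [← sub_le_iff_le_add]
  refine le_csInf (Set.Nonempty.image _ ⟨ĉ, hC.1 hĉ⟩) ?_
  rintro _ ⟨p', hp', rfl⟩
  obtain ⟨c', hc', hc'p'⟩ := hC.2 p' hp'
  have hp'pred := hP p' hp'
  rw [dnorm_sub_eq_pexp_abs_sub hD hsgn hp'pred (hpred hc')] at hc'p'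
  have htri := pexp_abs_sub_le (q := μ) (hpred hc').abs_le_one hp'pred.abs_le_one
    hps.abs_le_one
  simp only [abs_sub_comm (c' _) (p' _)] at htri
  calc dnorm μ D (ĉ - pstar) - ε = R ĉ - ε := by rw [hR hĉ]
    _ ≤ R c' - ε / 2 := by linarith [hERM hc']
    _ = (pexp μ fun x => |c' x - pstar x|) - ε / 2 :=
        congrArg (· - ε / 2) (pexp_exDist_absLoss μ (hpred hc') hps (hbin c' hc'))
    _ ≤ pexp μ fun x => |p' x - pstar x| := by linarith
    _ = dnorm μ D (p' - pstar) := (dnorm_sub_eq_pexp_abs_sub hD hsgn hp'pred hps).symm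

theorem achievesAg_ermLearner (hP : ∀ p ∈ P, Predictor p) (hD : ∀ d ∈ D, Dist1 d)
    (hsgn : {d : X → ℝ | ∀ x, d x = 1 ∨ d x = -1} ⊆ D) (hC : IsCover μ D P (ε / 2) C)
    (hCne : C.Nonempty) (hps : Predictor pstar)
    (hbin : ∀ c ∈ C, ∀ x, (c x = 0 ∨ c x = 1) ∨ (pstar x = 0 ∨ pstar x = 1))
    {n : ℕ} (hε0 : 0 ≤ ε) (hε8 : ε ≤ 8)
    (hfail : 2 * C.card * exp (-(n * (ε / 4) ^ 2 / 4)) ≤ δ) :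
    AchievesAg μ P D ε δ pstar (ermLearner C hCne n) := by
  let q := iid (exDist μ pstar) n
  let Bad : Set (Fin n → X × Bool) := ⋃ c ∈ C,
    {s | n * (ε / 4) ≤ |∑ i, absLoss c (s i) - n * pexp (exDist μ pstar) (absLoss c)|}
  have hBad : q.toOuterMeasure Bad ≤ ENNReal.ofReal δ := by
    refine (toOuterMeasure_iid_exists_abs_sum_sub_ge_le _ C absLoss
      (fun c hc => absLoss_mem_Icc (hP c (hC.1 hc))) n (by positivity) (by linarith)).trans ?_
    rw [← ENNReal.ofReal_natCast, ← ENNReal.ofReal_ofNat 2, ← ENNReal.ofReal_mul (by norm_num),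
      ← ENNReal.ofReal_mul (by positivity), ← mul_assoc, mul_comm (C.card : ℝ) 2]
    exact ENNReal.ofReal_le_ofReal hfail
  have hGood : (erm C hCne ⁻¹'
      {p | Predictor p ∧ dnorm μ D (p - pstar) ≤ agTarget μ P D pstar + ε})ᶜ ⊆ Bad := by
    intro s hs
    by_contra hsB
    simp only [Bad, Set.mem_iUnion, Set.mem_ofPred_eq, not_exists, not_le] at hsB
    exact hs ⟨hP _ (hC.1 (erm_mem C hCne s)),
      dnorm_erm_sub_le_agTarget_add hP hD hsgn hC hCne hps hbin hsB⟩
  have hδ : 0 ≤ δ := (by positivity : (0 : ℝ) ≤ 2 * C.card * exp _).trans hfail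
  change _ ≤ (q.map (erm C hCne)).toOuterMeasure _
  rw [PMF.toOuterMeasure_map_apply]
  exact ofReal_one_sub_le_of_compl_le q hδ ((MeasureTheory.measure_mono hGood).trans hBad)

end ERM

section SampleSize

theorem log_le_logb_two {x : ℝ} (hx : 1 ≤ x) : log x ≤ logb 2 x := by
  rw [logb, le_div_iff₀ (log_pos one_lt_two)]
  exact mul_le_of_le_one_right (log_nonneg hx) (by linarith [log_two_lt_d9])

theorem one_le_logb_add_logb_two_div {N δ : ℝ} (hN : 1 ≤ N) (hδ0 : 0 < δ) (hδ1 : δ ≤ 1) :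
    1 ≤ logb 2 N + logb 2 (2 / δ) := by
  have h2δ : 2 ≤ 2 / δ := by rw [le_div_iff₀ hδ0]; linarith
  have := logb_le_logb_of_le (b := 2) one_lt_two two_pos h2δ
  rw [logb_self_eq_one one_lt_two] at this
  linarith [logb_nonneg one_lt_two hN]

theorem two_mul_mul_exp_neg_le {N δ x : ℝ} (hN : 1 ≤ N) (hδ0 : 0 < δ) (hδ1 : δ ≤ 1)
    (hx : logb 2 N + logb 2 (2 / δ) ≤ x) : 2 * N * exp (-x) ≤ δ := by
  have hN0 : 0 < N := one_pos.trans_le hN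
  have hlog : log (2 * N / δ) ≤ x := by
    refine (log_le_logb_two ?_).trans (le_of_eq_of_le ?_ hx)
    · rw [le_div_iff₀ hδ0]; linarith
    · rw [show 2 * N / δ = N * (2 / δ) by ring, logb_mul hN0.ne' (by positivity)]
  calc 2 * N * exp (-x) ≤ 2 * N * exp (-log (2 * N / δ)) := by gcongr
    _ = δ := by rw [exp_neg, exp_log (by positivity)]; field_simp

theorem exists_sampleSize {B ε : ℝ} (hB : 1 ≤ B) (hε : ε ∈ Set.Ioo (0 : ℝ) 1) :
    ∃ n : ℕ, 0 < n ∧ (n : ℝ) ≤ 65 * B / ε ^ 2 ∧ B ≤ n * (ε / 4) ^ 2 / 4 := by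
  have hε2 : 0 < ε ^ 2 := pow_pos hε.1 2
  have hBε : B ≤ B / ε ^ 2 := le_div_self (by linarith) hε2 (pow_le_one₀ hε.1.le hε.2.le)
  have hpos : 0 < 64 * B / ε ^ 2 := by positivity
  refine ⟨⌈64 * B / ε ^ 2⌉₊, Nat.ceil_pos.2 hpos, ?_, ?_⟩
  · have := Nat.ceil_lt_add_one hpos.le
    have h65 : 65 * B / ε ^ 2 = 64 * B / ε ^ 2 + B / ε ^ 2 := by ring
    linarith
  · have := Nat.le_ceil (64 * B / ε ^ 2)
    rw [div_le_iff₀ hε2] at this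
    nlinarith

end SampleSize

end OI

/-- agnostic learning with `ℓ₁`-type distinguishers (`{−1,1}^X ⊆ D`) when either
`P` consists of binary classifiers or the target is a binary classifier: ERM with
`n = O((log N_{μ,D}(P,ε/2) + log(2/δ))/ε²)` samples outputs `p` with
`‖p − p*‖_{μ,D} ≤ inf_{p'∈P}‖p' − p*‖_{μ,D} + ε` with probability at least `1 − δ`. -/
theorem statement_15 :
    ∃ c : ℝ, 0 < c ∧
      ∀ (X : Type) (_ : Nonempty X) (μ : PMF X) (P D : Set (X → ℝ)),
        P.Nonempty → (∀ p ∈ P, Predictor p) →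
        (∀ d ∈ D, Dist1 d) → {d : X → ℝ | ∀ x, d x = 1 ∨ d x = -1} ⊆ D →
        ∀ ε δ : ℝ, ε ∈ Set.Ioo (0 : ℝ) 1 → δ ∈ Set.Ioo (0 : ℝ) 1 →
          covN μ D P (ε / 2) ≠ ⊤ →
            ∃ n : ℕ, 0 < n ∧
              (n : ℝ) ≤ c * (elog2 (covN μ D P (ε / 2)) + Real.logb 2 (2 / δ)) / ε ^ 2 ∧
              ∃ A : Learner X n, ∀ pstar : X → ℝ, Predictor pstar →
                ((∀ p ∈ P, ∀ x, p x = 0 ∨ p x = 1) ∨ (∀ x, pstar x = 0 ∨ pstar x = 1)) →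
                  AchievesAg μ P D ε δ pstar A := by
  refine ⟨65, by norm_num, ?_⟩
  intro X _ μ P D hPne hP hD hsgn ε δ hε hδ hcov
  obtain ⟨C, hC, hCcard⟩ := exists_finset_isCover_card_eq hcov
  have hCne : C.Nonempty := by
    obtain ⟨p, hp⟩ := hPne
    obtain ⟨c, hc, -⟩ := hC.2 p hp
    exact ⟨c, hc⟩
  have hN : 1 ≤ (C.card : ℝ) := Nat.one_le_cast.2 hCne.card_pos
  have helog : elog2 (covN μ D P (ε / 2)) = Real.logb 2 C.card := by
    rw [elog2, ← hCcard, ENat.toNat_natCast]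
  obtain ⟨n, hn, hnB, hBn⟩ :=
    exists_sampleSize (helog ▸ one_le_logb_add_logb_two_div hN hδ.1 hδ.2.le) hε
  refine ⟨n, hn, hnB, ermLearner C hCne n, fun pstar hps hbin => ?_⟩
  have hbin' : ∀ c ∈ C, ∀ x, (c x = 0 ∨ c x = 1) ∨ (pstar x = 0 ∨ pstar x = 1) :=
    fun c hc x => hbin.imp (fun h => h c (hC.1 hc) x) (fun h => h x)
  exact achievesAg_ermLearner hP hD hsgn hC hCne hps hbin' hε.1.le (by linarith [hε.2])
    (two_mul_mul_exp_neg_le hN hδ.1 hδ.2.le (helog ▸ hBn))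
end
end

section
/- Let m be a positive integer, X = {⊥} ∪ {0,1}^m, let μ put probability mass 1/3 on ⊥ and spread the remaining 2/3 uniformly over {0,1}^m, and let D consist of, for every parity function f : {0,1}^m → {0,1} (i.e., f(x) = ⊕_{i∈S} x_i for some S ⊆ {1,…,m}), the distinguisher d_f with d_f(⊥) = 1 and d_f(x) = (−1)^{f(x)} for all x ∈ {0,1}^m. For a function f : {0,1}^m → {0,1}, define the predictor p_f : X → [0,1] by p_f(⊥) = 1/2 and p_f(x) = (1 + (−1)^{f(x)})/2 for x ∈ {0,1}^m. Let p : X → [0,1] be any predictor and let L = { f : {0,1}^m → {0,1} : ‖p_f − p‖_{μ,D} ≤ 1/6 + 1/8 }. If p(⊥) ≤ 1/2, then L contains at most 64 parity functions; similarly, if p(⊥) ≥ 1/2, then L contains at most 64 anti-parity functions (functions of the form x ↦ 1 ⊕ f(x) for a parity function f). -/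
open scoped ENNReal Pointwise

noncomputable section

open OI

/-- The domain `X = {⊥} ∪ {0,1}^m`, with `none` playing the role of `⊥`. -/
abbrev Cube (m : ℕ) := Option (Fin m → Bool)

/-- The distribution `μ` putting mass `1/3` on `⊥` and `2/3` uniformly on the cube. -/
def cubeDist (m : ℕ) : PMF (Cube m) :=
  (bern (2 / 3)).bind fun b =>
    if b then (PMF.uniformOfFintype (Fin m → Bool)).map some else PMF.pure none

/-- The parity function associated with `S ⊆ {1,…,m}`: `v ↦ ⊕_{i∈S} v_i`. -/
def parityFun (m : ℕ) (S : Finset (Fin m)) : (Fin m → Bool) → Bool :=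
  fun v => decide (Odd (S.filter fun i => v i = true).card)

/-- The parity distinguisher associated with `S ⊆ {1,…,m}`: it maps `⊥` to `1` and `v` in the
cube to `(−1)^{⊕_{i∈S} v_i}`. -/
def parityD (m : ℕ) (S : Finset (Fin m)) : Cube m → ℝ :=
  fun x => x.elim 1 fun v => (-1 : ℝ) ^ (S.filter fun i => v i = true).card

/-- The class of all parity distinguishers. -/
def parityClass (m : ℕ) : Set (Cube m → ℝ) := Set.range (parityD m)

/-- For `f : {0,1}^m → {0,1}`, the predictor `p_f` with `p_f(⊥) = 1/2` and
`p_f(v) = (1 + (−1)^{f(v)})/2` on the cube. -/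
def predOf (m : ℕ) (f : (Fin m → Bool) → Bool) : Cube m → ℝ :=
  fun x => x.elim (1 / 2) fun v => (1 + (-1 : ℝ) ^ (if f v then 1 else 0)) / 2

/-!
Against the parity distinguisher `d_S`, the advantage of `p_{χ_S}` over `p` is
`(1/2 - p(⊥))/3 + (2/3)(1/2 + [S = ∅]/2 - p̂(S))`, where `p̂(S) = 𝔼_v p(v) χ_S(v)` is the Walsh
coefficient of `p` restricted to the cube. When `p(⊥) ≤ 1/2` the first term is nonnegative, so every
parity in `L` has `p̂(S) ≥ 1/16 + [S = ∅]/2`. Bessel's inequality for the orthonormal characters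
together with `p² ≤ p` gives `∑_S p̂(S)² ≤ 𝔼 p = p̂(∅)`, which leaves room for at most `64` such `S`.
Anti-parities reduce to parities through `p_{¬f} - p = -(p_f - (1 - p))`.
-/

open scoped BigOperators

namespace OI

variable {α β : Type*}

lemma pexp_eq_sum [Fintype α] (q : PMF α) (f : α → ℝ) :
    pexp q f = ∑ a, (q a).toReal * f a :=
  tsum_fintype _

lemma pexp_pure (a : α) (f : α → ℝ) : pexp (PMF.pure a) f = f a := by
  classical
  simp only [pexp, PMF.pure_apply]
  rw [tsum_eq_single a fun b hb => by simp [hb]]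
  simp

lemma pexp_bind [Fintype α] [Fintype β] (q : PMF α) (k : α → PMF β) (f : β → ℝ) :
    pexp (q.bind k) f = pexp q fun a => pexp (k a) f := by
  have hbind : ∀ b, (q.bind k b).toReal = ∑ a, (q a).toReal * (k a b).toReal := fun b => by
    rw [PMF.bind_apply, tsum_fintype, ENNReal.toReal_sum fun a _ =>
      ENNReal.mul_ne_top (q.apply_ne_top a) ((k a).apply_ne_top b)]
    simp only [ENNReal.toReal_mul]
  simp only [pexp_eq_sum, hbind, Finset.sum_mul, Finset.mul_sum]
  rw [Finset.sum_comm]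
  simp only [mul_assoc]

lemma pexp_map [Fintype α] [Fintype β] (q : PMF α) (g : α → β) (f : β → ℝ) :
    pexp (q.map g) f = pexp q (f ∘ g) := by
  rw [← PMF.bind_pure_comp, pexp_bind]
  simp only [Function.comp_apply, pexp_pure]
  rfl

lemma pexp_uniformOfFintype [Fintype α] [Nonempty α] (f : α → ℝ) :
    pexp (PMF.uniformOfFintype α) f = 𝔼 a, f a := by
  simp [pexp_eq_sum, Fintype.expect_eq_sum_div_card, div_eq_inv_mul, Finset.mul_sum]

lemma pexp_bool (q : PMF Bool) (f : Bool → ℝ) :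
    pexp q f = (q true).toReal * f true + (q false).toReal * f false := by
  rw [pexp_eq_sum, Fintype.sum_bool]

lemma pexp_bern {r : ℝ} (h0 : 0 ≤ r) (h1 : r ≤ 1) (f : Bool → ℝ) :
    pexp (bern r) f = r * f true + (1 - r) * f false := by
  have hr : min r.toNNReal 1 = r.toNNReal := min_eq_left (Real.toNNReal_le_one.mpr h1)
  have htrue : bern r true = r.toNNReal := by rw [← hr]; rfl
  have hfalse : bern r false = 1 - r.toNNReal := by rw [← hr]; rfl
  simp [pexp_bool, htrue, hfalse, h0, h1]

lemma abs_inn_le_dnorm_s18 (μ : PMF α) {F : Set (α → ℝ)} (hF : F.Finite)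
    (f : α → ℝ) {g : α → ℝ} (hg : g ∈ F) : |inn μ f g| ≤ dnorm μ F f :=
  le_csSup (hF.image _).bddAbove ⟨g, hg, rfl⟩

lemma dnorm_neg (μ : PMF α) (F : Set (α → ℝ)) (f : α → ℝ) :
    dnorm μ F (-f) = dnorm μ F f := by
  have : ∀ g, |inn μ (-f) g| = |inn μ f g| := fun g => by
    simp [inn, pexp, tsum_neg, abs_neg]
  simp only [dnorm, this]

lemma predictor_one_sub {p : α → ℝ} (hp : Predictor p) : Predictor (1 - p) :=
  fun x => ⟨by simp [(hp x).2], by simp [(hp x).1]⟩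

end OI

def walsh {m : ℕ} (S : Finset (Fin m)) (v : Fin m → Bool) : ℝ :=
  (-1) ^ (S.filter fun i => v i = true).card

section walsh

variable {m : ℕ}

lemma walsh_eq_prod (S : Finset (Fin m)) (v : Fin m → Bool) :
    walsh S v = ∏ i, if i ∈ S ∧ v i = true then -1 else 1 := by
  rw [Finset.prod_ite, Finset.prod_const, Finset.prod_const_one, mul_one, walsh]
  congr 2
  ext i; simp

lemma walsh_mul_self (S : Finset (Fin m)) (v : Fin m → Bool) : walsh S v * walsh S v = 1 := by
  rw [walsh, ← pow_add]
  exact Even.neg_one_pow ⟨_, rfl⟩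

lemma walsh_mul_walsh (S T : Finset (Fin m)) (v : Fin m → Bool) :
    walsh S v * walsh T v = walsh (symmDiff S T) v := by
  simp only [walsh_eq_prod, ← Finset.prod_mul_distrib]
  refine Finset.prod_congr rfl fun i _ => ?_
  by_cases hS : i ∈ S <;> by_cases hT : i ∈ T <;> cases v i <;> simp [Finset.mem_symmDiff, hS, hT]

lemma walsh_empty (v : Fin m → Bool) : walsh ∅ v = 1 := by simp [walsh]

lemma expect_walsh (S : Finset (Fin m)) : 𝔼 v, walsh S v = if S = ∅ then 1 else 0 := by
  have hfactor : ∀ i : Fin m,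
      ∑ b : Bool, (if i ∈ S ∧ b = true then (-1 : ℝ) else 1) = if i ∈ S then 0 else 2 := by
    intro i; by_cases hi : i ∈ S <;> simp [hi]
  have hsum : ∑ v, walsh S v = if S = ∅ then 2 ^ m else 0 := by
    simp only [walsh_eq_prod]
    rw [← Fintype.prod_sum fun i (b : Bool) => if i ∈ S ∧ b = true then (-1 : ℝ) else 1]
    simp only [hfactor]
    split_ifs with hS
    · simp [hS]
    · obtain ⟨i, hi⟩ := Finset.nonempty_iff_ne_empty.mpr hS
      exact Finset.prod_eq_zero (Finset.mem_univ i) (by simp [hi])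
  rw [Fintype.expect_eq_sum_div_card, hsum]
  split_ifs <;> simp

lemma expect_walsh_mul_walsh (S T : Finset (Fin m)) :
    𝔼 v, walsh S v * walsh T v = if S = T then 1 else 0 := by
  simp only [walsh_mul_walsh, expect_walsh, ← Finset.bot_eq_empty, symmDiff_eq_bot]

end walsh

def walshCoeff {m : ℕ} (q : (Fin m → Bool) → ℝ) (S : Finset (Fin m)) : ℝ :=
  𝔼 v, q v * walsh S v

section walshCoeff

variable {m : ℕ}

lemma sum_walshCoeff_sq_le (q : (Fin m → Bool) → ℝ) (s : Finset (Finset (Fin m))) :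
    ∑ S ∈ s, walshCoeff q S ^ 2 ≤ 𝔼 v, q v ^ 2 := by
  set N : ℝ := 2 ^ m with hN
  have hN0 : 0 < N := by positivity
  have hinner : ∀ u w : (Fin m → Bool) → ℝ,
      inner ℝ (WithLp.toLp 2 u) (WithLp.toLp 2 w) = N * 𝔼 v, u v * w v := fun u w => by
    have hcard : (Fintype.card (Fin m → Bool) : ℝ) = N := by simp [hN]
    rw [EuclideanSpace.inner_toLp_toLp, Fintype.expect_eq_sum_div_card, hcard,
      mul_div_cancel₀ _ hN0.ne', dotProduct]
    simp [mul_comm]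
  let e : Finset (Fin m) → EuclideanSpace ℝ (Fin m → Bool) :=
    fun S => (√N)⁻¹ • WithLp.toLp 2 (walsh S)
  have he : Orthonormal ℝ e := orthonormal_iff_ite.mpr fun S T => by
    rw [real_inner_smul_left, real_inner_smul_right, hinner, expect_walsh_mul_walsh,
      ← mul_assoc, ← mul_assoc, ← mul_inv, Real.mul_self_sqrt hN0.le, inv_mul_cancel₀ hN0.ne',
      one_mul]
  have hcoeff : ∀ S, ‖inner ℝ (e S) (WithLp.toLp 2 q)‖ ^ 2 = N * walshCoeff q S ^ 2 := by
    intro S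
    rw [real_inner_smul_left, hinner, Real.norm_eq_abs, sq_abs, walshCoeff]
    simp only [mul_comm (walsh S _)]
    rw [mul_pow, mul_pow, inv_pow, Real.sq_sqrt hN0.le]
    field_simp
  have hbessel := he.sum_inner_products_le (WithLp.toLp 2 q) (s := s)
  rw [← real_inner_self_eq_norm_sq, hinner, Finset.sum_congr rfl fun S _ => hcoeff S,
    ← Finset.mul_sum] at hbessel
  simpa only [sq] using le_of_mul_le_mul_left hbessel hN0

lemma walshCoeff_empty (q : (Fin m → Bool) → ℝ) : walshCoeff q ∅ = 𝔼 v, q v := by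
  simp [walshCoeff, walsh_empty]

lemma sum_walshCoeff_sq_le_walshCoeff_empty {p : Cube m → ℝ} (hp : Predictor p)
    (s : Finset (Finset (Fin m))) :
    ∑ S ∈ s, walshCoeff (fun v => p (some v)) S ^ 2 ≤ walshCoeff (fun v => p (some v)) ∅ := by
  refine (sum_walshCoeff_sq_le _ s).trans ?_
  rw [walshCoeff_empty]
  refine Finset.expect_le_expect fun v _ => ?_
  obtain ⟨h0, h1⟩ := hp (some v)
  nlinarith

end walshCoeff

-- `c₀ := c i₀` satisfies `c₀² + #(F \ {i₀}) ε² ≤ c₀`, and `c₀ - c₀² ≤ 1/4 - ε²` once `c₀ ≥ 1/2 + ε`.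
lemma card_le_of_sum_sq_le {ι : Type*} [DecidableEq ι] (c : ι → ℝ) (i₀ : ι)
    (F : Finset ι) (hsum : ∑ i ∈ insert i₀ F, c i ^ 2 ≤ c i₀) {ε : ℝ} (hε : 0 < ε)
    (hF : ∀ i ∈ F, ε + (if i = i₀ then 1 / 2 else 0) ≤ c i) :
    (F.card : ℝ) ≤ 1 / (4 * ε ^ 2) := by
  rw [le_div_iff₀ (by positivity)]
  set E := F.erase i₀
  have hsplit : ∑ i ∈ insert i₀ F, c i ^ 2 = c i₀ ^ 2 + ∑ i ∈ E, c i ^ 2 := by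
    rw [← Finset.insert_erase (Finset.mem_insert_self i₀ F), Finset.erase_insert_eq_erase,
      Finset.sum_insert (Finset.notMem_erase i₀ F)]
  have hE : E.card * ε ^ 2 ≤ ∑ i ∈ E, c i ^ 2 := by
    rw [← nsmul_eq_mul]
    refine Finset.card_nsmul_le_sum _ _ _ fun i hi => ?_
    have := hF i (Finset.mem_of_mem_erase hi)
    rw [if_neg (Finset.ne_of_mem_erase hi), add_zero] at this
    exact pow_le_pow_left₀ hε.le this 2
  by_cases hi₀ : i₀ ∈ F
  · have hc := hF i₀ hi₀
    rw [if_pos rfl] at hc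
    have hcard : (F.card : ℝ) = E.card + 1 := by
      rw [Finset.card_erase_of_mem hi₀, Nat.cast_sub (Finset.card_pos.mpr ⟨i₀, hi₀⟩)]
      ring
    rw [hcard]
    nlinarith
  · have hEF : E = F := Finset.erase_eq_of_notMem hi₀
    rw [hEF] at hsplit hE
    nlinarith [sq_nonneg (c i₀ - 1 / 2)]

lemma pexp_cubeDist (m : ℕ) (g : Cube m → ℝ) :
    pexp (cubeDist m) g = 1 / 3 * g none + 2 / 3 * 𝔼 v, g (some v) := by
  rw [cubeDist, pexp_bind, pexp_bern (by norm_num) (by norm_num)]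
  simp only [if_true, Bool.false_eq_true, if_false, pexp_map, pexp_pure,
    pexp_uniformOfFintype, Function.comp_apply]
  ring

lemma inn_cubeDist_parityD {m : ℕ} (f : Cube m → ℝ) (S : Finset (Fin m)) :
    inn (cubeDist m) f (parityD m S) =
      1 / 3 * f none + 2 / 3 * 𝔼 v, f (some v) * walsh S v := by
  simp only [inn, pexp_cubeDist, parityD, Option.elim, mul_one, walsh]

section parity

variable {m : ℕ}

lemma predOf_parityFun_some (S : Finset (Fin m)) (v : Fin m → Bool) :
    predOf m (parityFun m S) (some v) = (1 + walsh S v) / 2 := by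
  have hexp : (if parityFun m S v then 1 else 0) = (S.filter fun i => v i = true).card % 2 := by
    simp only [parityFun, decide_eq_true_eq, Nat.odd_iff]
    split_ifs <;> omega
  simp only [predOf, Option.elim, walsh, hexp, ← neg_one_pow_eq_pow_mod_two]

lemma predOf_not (f : (Fin m → Bool) → Bool) :
    predOf m (fun v => !f v) = 1 - predOf m f := by
  ext (_ | v)
  · norm_num [predOf]
  · cases hfv : f v <;> simp [predOf, hfv]

lemma inn_predOf_parityFun_sub (p : Cube m → ℝ) (S : Finset (Fin m)) :
    inn (cubeDist m) (predOf m (parityFun m S) - p) (parityD m S) =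
      1 / 3 * (1 / 2 - p none) +
        2 / 3 * (1 / 2 + (if S = ∅ then 1 / 2 else 0) - walshCoeff (fun v => p (some v)) S) := by
  have hsummand : ∀ v, (predOf m (parityFun m S) - p) (some v) * walsh S v =
      walsh S v * walsh ∅ v / 2 + walsh S v * walsh S v / 2 - p (some v) * walsh S v := by
    intro v
    rw [Pi.sub_apply, predOf_parityFun_some, walsh_empty]
    ring
  simp only [inn_cubeDist_parityD, hsummand, Finset.expect_sub_distrib, Finset.expect_add_distrib,
    ← Finset.expect_div, expect_walsh_mul_walsh, walsh_mul_self, Fintype.expect_one]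
  simp only [walshCoeff, Pi.sub_apply, predOf, Option.elim]
  split_ifs <;> ring

lemma le_walshCoeff_of_dnorm_le {p : Cube m → ℝ} (hp : p none ≤ 1 / 2) {S : Finset (Fin m)}
    (hS : dnorm (cubeDist m) (parityClass m) (predOf m (parityFun m S) - p) ≤ 1 / 6 + 1 / 8) :
    1 / 16 + (if S = ∅ then 1 / 2 else 0) ≤ walshCoeff (fun v => p (some v)) S := by
  have h := (le_abs_self _).trans <| (abs_inn_le_dnorm_s18 (cubeDist m) (Set.finite_range _)
    (predOf m (parityFun m S) - p) ⟨S, rfl⟩).trans hS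
  rw [inn_predOf_parityFun_sub] at h
  linarith

lemma ncard_setOf_dnorm_predOf_parityFun_le {p : Cube m → ℝ} (hp : Predictor p)
    (hp_none : p none ≤ 1 / 2) :
    {S : Finset (Fin m) |
      dnorm (cubeDist m) (parityClass m) (predOf m (parityFun m S) - p) ≤ 1 / 6 + 1 / 8}.ncard
      ≤ 64 := by
  classical
  rw [Set.ncard_eq_toFinset_card', ← Nat.cast_le (α := ℝ)]
  refine le_trans (card_le_of_sum_sq_le _ ∅ _ (sum_walshCoeff_sq_le_walshCoeff_empty hp _)
    (ε := 1 / 16) (by norm_num) fun S hS => ?_) (by norm_num)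
  exact le_walshCoeff_of_dnorm_le hp_none (by simpa using hS)

end parity

lemma Set.ncard_setOf_and_exists_eq_le {α β : Type*} [Finite α] (P : β → Prop) (g : α → β) :
    {b | P b ∧ ∃ a, b = g a}.ncard ≤ {a | P (g a)}.ncard := by
  have : {b | P b ∧ ∃ a, b = g a} = g '' {a | P (g a)} := by
    ext b
    constructor
    · rintro ⟨hb, a, rfl⟩; exact ⟨a, hb, rfl⟩
    · rintro ⟨a, ha, rfl⟩; exact ⟨ha, a, rfl⟩
  rw [this]
  exact Set.ncard_image_le (Set.toFinite _)

theorem statement_18_general (m : ℕ) (p : Cube m → ℝ) (hp : Predictor p) :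
    (p none ≤ 1 / 2 →
      {f : (Fin m → Bool) → Bool |
        dnorm (cubeDist m) (parityClass m) (predOf m f - p) ≤ 1 / 6 + 1 / 8 ∧
          ∃ S : Finset (Fin m), f = parityFun m S}.ncard ≤ 64) ∧
    (1 / 2 ≤ p none →
      {f : (Fin m → Bool) → Bool |
        dnorm (cubeDist m) (parityClass m) (predOf m f - p) ≤ 1 / 6 + 1 / 8 ∧
          ∃ S : Finset (Fin m), f = fun v => !(parityFun m S v)}.ncard ≤ 64) := by
  refine ⟨fun hp_none => ?_, fun hp_none => ?_⟩
  · exact (Set.ncard_setOf_and_exists_eq_le _ _).trans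
      (ncard_setOf_dnorm_predOf_parityFun_le hp hp_none)
  · have hflip : ∀ S : Finset (Fin m),
        predOf m (fun v => !(parityFun m S v)) - p = -(predOf m (parityFun m S) - (1 - p)) :=
      fun S => by rw [predOf_not]; abel
    refine (Set.ncard_setOf_and_exists_eq_le _ _).trans ?_
    simp only [hflip, dnorm_neg]
    exact ncard_setOf_dnorm_predOf_parityFun_le (predictor_one_sub hp)
      (by simp only [Pi.sub_apply, Pi.one_apply]; linarith)

/-- let `L = {f : ‖p_f − p‖_{μ,D} ≤ 1/6 + 1/8}` for the parity distinguisher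
class `D` and the distribution `μ` above. If `p(⊥) ≤ 1/2` then `L` contains at most `64`
parity functions, and if `p(⊥) ≥ 1/2` then `L` contains at most `64` anti-parity functions. -/
theorem statement_18 (m : ℕ) (hm : 0 < m) (p : Cube m → ℝ) (hp : Predictor p) :
    (p none ≤ 1 / 2 →
      {f : (Fin m → Bool) → Bool |
        dnorm (cubeDist m) (parityClass m) (predOf m f - p) ≤ 1 / 6 + 1 / 8 ∧
          ∃ S : Finset (Fin m), f = parityFun m S}.ncard ≤ 64) ∧
    (1 / 2 ≤ p none →
      {f : (Fin m → Bool) → Bool |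
        dnorm (cubeDist m) (parityClass m) (predOf m f - p) ≤ 1 / 6 + 1 / 8 ∧
          ∃ S : Finset (Fin m), f = fun v => !(parityFun m S v)}.ncard ≤ 64) :=
  statement_18_general m p hp
end
end
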